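/- arXiv:2110.04625 — 10 statements merged into one kernel-verified Lean document; each statement's English description precedes it below -/
import Mathlib

section
/- Let n, d ≥ 1 with d ≥ n+1. Define W = {w ∈ ℤ_{≥0}^{n+1} : 0 = w_0 ≤ w_1 ≤ … ≤ w_n} and for w ∈ W, the map f_w : J → ℤ_{≥0}, i ↦ max(0, ⌊⟨d·𝟏 − (n+1)i, w⟩/(n+1)⌋ + 1), where J = {i ∈ ℤ_{≥0}^{n+1} : Σ i_j = d}. Then the map W → ℤ_{≥0}^J, w ↦ f_w, is injective. -/
open MvPolynomial

/-- The index set `J` of exponent vectors of monomials of degree `d` in `n+1` variables. -/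
def Jset (n d : ℕ) := {i : Fin (n + 1) → ℕ // ∑ j, i j = d}

/-- The set `W` of weight vectors `w` with `0 = w_0 ≤ w_1 ≤ … ≤ w_n`. -/
def Wset (n : ℕ) : Set (Fin (n + 1) → ℕ) := {w | w 0 = 0 ∧ Monotone w}

/-- The function `f_w : J → ℤ_{≥0}`, `f_w(i) = max(0, ⌊⟨d·𝟏 − (n+1)i, w⟩/(n+1)⌋ + 1)`. -/
def fw (n d : ℕ) (w : Fin (n + 1) → ℕ) (i : Jset n d) : ℕ :=
  ((∑ j, ((d : ℤ) - (n + 1) * i.1 j) * w j) / (n + 1) + 1).toNat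

lemma sum_split (n d : ℕ) (i w : Fin (n+1) → ℕ) :
    ∑ j, ((d : ℤ) - (n + 1) * i j) * w j
      = d * (∑ j, (w j : ℤ)) - (n+1) * ∑ j, (i j : ℤ) * w j := by
  rw [Finset.mul_sum, Finset.mul_sum, ← Finset.sum_sub_distrib]
  exact Finset.sum_congr rfl fun j _ => by ring

def e0 (n d : ℕ) (hd : 1 ≤ d) : Jset n d :=
  ⟨fun j => if j = 0 then d else 0, by simp⟩

def ek (n d : ℕ) (hd : 1 ≤ d) (k : Fin (n+1)) (hk : k ≠ 0) : Jset n d :=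
  ⟨fun j => (if j = 0 then d - 1 else 0) + (if j = k then 1 else 0), by
    rw [Finset.sum_add_distrib]
    simp [Finset.sum_ite_eq', hk.symm]
    omega⟩

lemma fw_e0 (n d : ℕ) (hd : 1 ≤ d) (w : Fin (n+1) → ℕ) (hw0 : w 0 = 0) :
    fw n d w (e0 n d hd) = ((d * ∑ j, (w j : ℤ)) / (n+1) + 1).toNat := by
  unfold fw
  rw [sum_split]
  congr 2
  have : ∑ j, ((e0 n d hd).1 j : ℤ) * w j = 0 := by
    simp [e0, apply_ite (Nat.cast : ℕ → ℤ), ite_mul, Finset.sum_ite_eq', hw0]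
  rw [this]; ring

lemma fw_ek (n d : ℕ) (hd : 1 ≤ d) (k : Fin (n+1)) (hk : k ≠ 0)
    (w : Fin (n+1) → ℕ) (hw0 : w 0 = 0) :
    fw n d w (ek n d hd k hk) = ((d * ∑ j, (w j : ℤ)) / (n+1) - w k + 1).toNat := by
  unfold fw
  rw [sum_split]
  have h1 : ∑ j, (((ek n d hd k hk).1 j : ℤ)) * w j = w k := by
    simp only [ek, Nat.cast_add, apply_ite (Nat.cast : ℕ → ℤ), Nat.cast_zero, Nat.cast_one,
      add_mul, ite_mul, zero_mul, one_mul, Finset.sum_add_distrib, Finset.sum_ite_eq',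
      Finset.mem_univ, if_true]
    rw [hw0]; ring
  rw [h1]
  have hn1 : (0:ℤ) < (n:ℤ) + 1 := by positivity
  have : (d * ∑ j, (w j : ℤ)) - (n+1) * w k
      = (d * ∑ j, (w j : ℤ)) + (-(w k)) * ((n:ℤ)+1) := by ring
  rw [this, Int.add_mul_ediv_right _ _ (ne_of_gt hn1), ← sub_eq_add_neg]

/-- If `d ≥ n + 1`, then the map `W → ℤ_{≥0}^J`, `w ↦ f_w`, is injective. -/
theorem stmt_3 (n d : ℕ) (hn : 1 ≤ n) (hd : n + 1 ≤ d) :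
    Set.InjOn (fw n d) (Wset n) := by
  intro w hw v hv h
  obtain ⟨hw0, hwm⟩ := hw
  obtain ⟨hv0, hvm⟩ := hv
  have hd1 : 1 ≤ d := le_trans (by omega) hd
  -- common facts
  have key : ∀ (u : Fin (n+1) → ℕ), u 0 = 0 →
      ∀ k, (u k : ℤ) ≤ (d * ∑ j, (u j : ℤ)) / (n+1) := by
    intro u hu0 k
    have hS : (u k : ℤ) ≤ ∑ j, (u j : ℤ) :=
      Finset.single_le_sum (f := fun j => (u j : ℤ)) (fun j _ => by positivity) (Finset.mem_univ k)
    have hSnn : (0:ℤ) ≤ ∑ j, (u j : ℤ) :=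
      Finset.sum_nonneg fun j _ => by positivity
    have : (∑ j, (u j : ℤ)) ≤ (d * ∑ j, (u j : ℤ)) / (n+1) := by
      rw [Int.le_ediv_iff_mul_le (by positivity)]
      calc (∑ j, (u j : ℤ)) * ((n:ℤ)+1) = ((n:ℤ)+1) * ∑ j, (u j : ℤ) := by ring
        _ ≤ d * ∑ j, (u j : ℤ) := by
            apply mul_le_mul_of_nonneg_right _ hSnn
            exact_mod_cast hd
    exact le_trans hS this
  set qw := (d * ∑ j, (w j : ℤ)) / (n+1) with hqw
  set qv := (d * ∑ j, (v j : ℤ)) / (n+1) with hqv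
  have hqwnn : (0:ℤ) ≤ qw := le_trans (by positivity) (key w hw0 0)
  have hqvnn : (0:ℤ) ≤ qv := le_trans (by positivity) (key v hv0 0)
  have he0 : qw = qv := by
    have h0 := congrFun h (e0 n d hd1)
    rw [fw_e0 n d hd1 w hw0, fw_e0 n d hd1 v hv0] at h0
    omega
  funext k
  by_cases hk : k = 0
  · subst hk; rw [hw0, hv0]
  · have hwk := key w hw0 k
    have hvk := key v hv0 k
    have hk1 := congrFun h (ek n d hd1 k hk)
    rw [fw_ek n d hd1 k hk w hw0, fw_ek n d hd1 k hk v hv0] at hk1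
    omega
end

section
/- Let C ⊆ ℝ^n be a polyhedral cone of dimension k ≤ n spanned by integer vectors u_1, …, u_m with 0 ≤ Σ(u_j) ≤ a for all j, where Σ(v) denotes the sum of the coordinates of v. Then for every integer point z in the relative interior C⁰ of C, there exists an integer point z' ∈ C⁰ with Σ(z') ≤ k·a and z ∈ z' + C. -/
/-!
By the conic Carathéodory theorem, `z = ∑ νⱼ uⱼ` with `ν ≥ 0` supported on a set `S` of at most
`k` linearly independent generators. Mixing in a little of a strictly positive representation
`z = ∑ λⱼ uⱼ` gives `z = ∑ wⱼ uⱼ` with all `wⱼ > 0`, in which the terms with `j ∉ S` contribute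
less than `1` to the coordinate sum. Subtracting the integer multiples `(⌈wⱼ⌉ - 1) uⱼ` leaves an
integer point `z'` of `C⁰` with coefficients in `(0, 1]`, so `Σ(z') < ∑_{j ∈ S} Σ(uⱼ) + 1 ≤ k·a + 1`.
-/

open Finset Submodule Module Function

section ConicCaratheodory

variable {𝕜 E ι : Type*} [Field 𝕜] [AddCommGroup E] [Module 𝕜 E] [Fintype ι]

theorem LinearIndepOn.card_le_finrank_span {v : ι → E} {S : Finset ι}
    (hS : LinearIndepOn 𝕜 v (S : Set ι)) : S.card ≤ finrank 𝕜 (span 𝕜 (Set.range v)) := by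
  have := Module.Finite.span_of_finite 𝕜 (Set.finite_range v)
  calc S.card = finrank 𝕜 (span 𝕜 (Set.range fun i : (S : Set ι) => v i)) := by
        rw [finrank_span_eq_card hS.linearIndependent]; simp
    _ ≤ finrank 𝕜 (span 𝕜 (Set.range v)) :=
        Submodule.finrank_mono (span_mono (Set.range_comp_subset_range _ v))

theorem sum_le_finrank_span_mul (v : ι → E) {s : ι → ℤ} {a : ℤ} (hs : ∀ j, 0 ≤ s j ∧ s j ≤ a)
    {S : Finset ι} (hS : LinearIndepOn 𝕜 v (S : Set ι)) :
    ∑ j ∈ S, s j ≤ finrank 𝕜 (span 𝕜 (Set.range v)) * a := by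
  rcases isEmpty_or_nonempty ι with hι | ⟨⟨j⟩⟩
  · rw [Set.range_eq_empty v, span_empty, finrank_bot]
    simp [Finset.eq_empty_of_isEmpty S]
  calc ∑ j ∈ S, s j ≤ S.card * a := by simpa using sum_le_card_nsmul S s a fun j _ => (hs j).2
    _ ≤ finrank 𝕜 (span 𝕜 (Set.range v)) * a :=
        mul_le_mul_of_nonneg_right (by exact_mod_cast hS.card_le_finrank_span)
          ((hs j).1.trans (hs j).2)

variable [LinearOrder 𝕜] [IsStrictOrderedRing 𝕜]

lemma exists_nonneg_sub_mul_eq_zero {ν g : ι → 𝕜} (hν : ∀ i, 0 ≤ ν i) (hg : ∃ i, 0 < g i) :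
    ∃ t : 𝕜, (∀ i, 0 ≤ ν i - t * g i) ∧ ∃ i, g i ≠ 0 ∧ ν i - t * g i = 0 := by
  classical
  obtain ⟨i₀, hi₀, hmin⟩ := (univ.filter fun i => 0 < g i).exists_min_image
    (fun i => ν i / g i) (by simpa [Finset.Nonempty] using hg)
  rw [mem_filter] at hi₀
  have ht : 0 ≤ ν i₀ / g i₀ := div_nonneg (hν i₀) hi₀.2.le
  refine ⟨ν i₀ / g i₀, fun i => ?_, i₀, hi₀.2.ne', by simp [hi₀.2.ne']⟩
  rw [sub_nonneg]
  rcases le_or_gt (g i) 0 with hgi | hgi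
  · exact (mul_nonpos_of_nonneg_of_nonpos ht hgi).trans (hν i)
  · exact (le_div_iff₀ hgi).mp (hmin i (by simp [hgi]))

lemma exists_nonneg_combination_support_ssubset (v : ι → E) {ν : ι → 𝕜} (hν : ∀ i, 0 ≤ ν i)
    (hdep : ¬LinearIndepOn 𝕜 v (support ν)) :
    ∃ ν' : ι → 𝕜, (∀ i, 0 ≤ ν' i) ∧ ∑ i, ν' i • v i = ∑ i, ν i • v i ∧
      support ν' ⊂ support ν := by
  obtain ⟨g, hgν, hgv, hg⟩ :
      ∃ g : ι → 𝕜, support g ⊆ support ν ∧ ∑ i, g i • v i = 0 ∧ ∃ i, 0 < g i := by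
    obtain ⟨f, hfν, hfv, hf⟩ := linearDepOn_iff'.mp hdep
    rw [Finsupp.mem_supported] at hfν
    rw [Finsupp.linearCombination_apply, Finsupp.sum_fintype _ _ (by simp)] at hfv
    obtain ⟨i, hi⟩ : ∃ i, f i ≠ 0 := by simpa [Finsupp.ext_iff] using hf
    rcases hi.lt_or_gt with hi | hi
    · exact ⟨-f, by simpa using hfν, by simp [hfv], i, by simpa using hi⟩
    · exact ⟨f, by simpa using hfν, hfv, i, hi⟩
  obtain ⟨t, hνt, i, hgi, hνti⟩ := exists_nonneg_sub_mul_eq_zero hν hg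
  refine ⟨fun i => ν i - t * g i, hνt,
    by simp [sub_smul, mul_smul, sum_sub_distrib, ← smul_sum, hgv], ?_⟩
  refine Set.ssubset_iff_subset_ne.mpr ⟨?_, fun h => ?_⟩
  · exact (support_sub _ _).trans
      (Set.union_subset le_rfl ((support_const_smul_subset t g).trans hgν))
  · exact (h ▸ hgν) hgi hνti

theorem exists_nonneg_combination_linearIndepOn (v : ι → E) {ν : ι → 𝕜} (hν : ∀ i, 0 ≤ ν i) :
    ∃ ν' : ι → 𝕜, (∀ i, 0 ≤ ν' i) ∧ ∑ i, ν' i • v i = ∑ i, ν i • v i ∧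
      LinearIndepOn 𝕜 v (support ν') := by
  induction hN : (support ν).ncard using Nat.strong_induction_on generalizing ν with
  | _ N ih =>
  by_cases hli : LinearIndepOn 𝕜 v (support ν)
  · exact ⟨ν, hν, rfl, hli⟩
  obtain ⟨ν', hν', hν'v, hlt⟩ := exists_nonneg_combination_support_ssubset v hν hli
  obtain ⟨ν'', hν'', hν''v, hli''⟩ :=
    ih _ (hN ▸ Set.ncard_lt_ncard hlt (Set.toFinite _)) hν' rfl
  exact ⟨ν'', hν'', hν''v.trans hν'v, hli''⟩

lemma exists_pos_combination_le_add (v : ι → E) {ν lam s : ι → 𝕜} (hν : ∀ j, 0 ≤ ν j)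
    (hlam : ∀ j, 0 < lam j) (hs : ∀ j, 0 ≤ s j) (hνlam : ∑ j, ν j • v j = ∑ j, lam j • v j) :
    ∃ w : ι → 𝕜, (∀ j, 0 < w j) ∧ ∑ j, w j • v j = ∑ j, lam j • v j ∧
      ∃ δ : ι → 𝕜, (∀ j, 0 ≤ δ j) ∧ (∀ j, w j ≤ ν j + δ j) ∧ ∑ j, δ j * s j < 1 := by
  have hS : 0 ≤ ∑ j, lam j * s j := sum_nonneg fun j _ => mul_nonneg (hlam j).le (hs j)
  set ε := 1 / (∑ j, lam j * s j + 1) with hε_def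
  have hε : 0 < ε := by positivity
  have hε1 : ε ≤ 1 := div_le_one_of_le₀ (by linarith) (by linarith)
  refine ⟨(1 - ε) • ν + ε • lam, fun j => ?_, ?_, ε • lam, fun j => ?_, fun j => ?_, ?_⟩
  · simpa using add_pos_of_nonneg_of_pos (mul_nonneg (sub_nonneg.mpr hε1) (hν j))
      (mul_pos hε (hlam j))
  · simp only [Pi.add_apply, Pi.smul_apply, smul_eq_mul, add_smul, mul_smul, sum_add_distrib,
      ← smul_sum, hνlam]
    module
  · exact mul_nonneg hε.le (hlam j).le
  · simpa using mul_le_of_le_one_left (hν j) (sub_le_self 1 hε.le)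
  · simp only [Pi.smul_apply, smul_eq_mul, mul_assoc, ← mul_sum]
    rw [hε_def, div_mul_eq_mul_div, one_mul, div_lt_one (by linarith)]
    linarith

lemma sum_mul_lt_sum_add_one (S : Finset ι) {μ w s : ι → 𝕜} (hs : ∀ j, 0 ≤ s j)
    (hw : ∀ j, 0 ≤ w j) (hμ : ∀ j, μ j ≤ 1) (hμw : ∀ j ∉ S, μ j ≤ w j)
    (hws : ∑ j, w j * s j < 1) : ∑ j, μ j * s j < ∑ j ∈ S, s j + 1 := by
  classical
  rw [← sum_add_sum_compl S]
  have hin : ∑ j ∈ S, μ j * s j ≤ ∑ j ∈ S, s j :=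
    sum_le_sum fun j _ => mul_le_of_le_one_left (hs j) (hμ j)
  have hout : ∑ j ∈ Sᶜ, μ j * s j ≤ ∑ j, w j * s j :=
    (sum_le_sum fun j hj => mul_le_mul_of_nonneg_right (hμw j (mem_compl.mp hj)) (hs j)).trans
      (sum_le_sum_of_subset_of_nonneg (subset_univ _) fun j _ _ => mul_nonneg (hw j) (hs j))
  linarith

end ConicCaratheodory

lemma Int.exists_nonneg_sub_mem_Ioc {𝕜 : Type*} [Field 𝕜] [LinearOrder 𝕜]
    [IsStrictOrderedRing 𝕜] [FloorRing 𝕜] {x : 𝕜} (hx : 0 < x) :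
    ∃ c : ℤ, 0 ≤ c ∧ x - c ∈ Set.Ioc 0 1 := by
  refine ⟨⌈x⌉ - 1, by linarith [Int.ceil_pos.mpr hx], ?_⟩
  push_cast
  constructor <;> linarith [Int.ceil_lt_add_one x, Int.le_ceil x]

section IntegerPoints

variable {ι κ : Type*} [Fintype ι]

lemma intCast_sum_mul (c : ι → ℤ) (u : ι → κ → ℤ) :
    (fun t => ((∑ j, c j * u j t : ℤ) : ℝ)) = ∑ j, (c j : ℝ) • fun t => (u j t : ℝ) := by
  ext t
  simp [Finset.sum_apply]

lemma sum_sum_smul_apply [Fintype κ] (μ : ι → ℝ) (x : ι → κ → ℝ) :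
    ∑ t, (∑ j, μ j • x j) t = ∑ j, μ j * ∑ t, x j t := by
  simp only [Finset.sum_apply, Pi.smul_apply, smul_eq_mul, mul_sum]
  exact sum_comm

lemma exists_sub_sum_mul_eq_sum_smul (z : κ → ℤ) (u : ι → κ → ℤ) {w : ι → ℝ}
    (hw : ∀ j, 0 < w j) (hz : (fun t => (z t : ℝ)) = ∑ j, w j • fun t => (u j t : ℝ)) :
    ∃ c : ι → ℤ, (∀ j, 0 ≤ c j) ∧ (∀ j, w j - c j ∈ Set.Ioc 0 1) ∧
      (fun t => ((z t - ∑ j, c j * u j t : ℤ) : ℝ)) =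
        ∑ j, (w j - c j) • fun t => (u j t : ℝ) := by
  choose c hc hcw using fun j => Int.exists_nonneg_sub_mem_Ioc (hw j)
  refine ⟨c, hc, hcw, ?_⟩
  simp only [sub_smul, sum_sub_distrib, ← hz, ← intCast_sum_mul]
  ext t
  push_cast
  rfl

end IntegerPoints

theorem stmt_4_general (n m k : ℕ) (a : ℤ) (u : Fin m → Fin n → ℤ)
    (hsum : ∀ j, 0 ≤ ∑ t, u j t ∧ ∑ t, u j t ≤ a)
    (hdim : Module.finrank ℝ
      (Submodule.span ℝ (Set.range fun j => fun t => (u j t : ℝ))) = k)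
    (z : Fin n → ℤ)
    (hz : ∃ lam : Fin m → ℝ, (∀ j, 0 < lam j) ∧
      (fun t => (z t : ℝ)) = ∑ j, lam j • fun t => (u j t : ℝ)) :
    ∃ z' : Fin n → ℤ,
      (∃ lam : Fin m → ℝ, (∀ j, 0 < lam j) ∧
        (fun t => (z' t : ℝ)) = ∑ j, lam j • fun t => (u j t : ℝ)) ∧
      (∑ t, z' t) ≤ (k : ℤ) * a ∧
      (∃ lam : Fin m → ℝ, (∀ j, 0 ≤ lam j) ∧
        (fun t => ((z t - z' t : ℤ) : ℝ)) = ∑ j, lam j • fun t => (u j t : ℝ)) := by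
  classical
  obtain ⟨lam, hlam, hz⟩ := hz
  set U : Fin m → Fin n → ℝ := fun j t => u j t
  have hU : ∀ j, 0 ≤ ∑ t, U j t := fun j => by simp only [U]; exact_mod_cast (hsum j).1
  obtain ⟨ν, hν, hνU, hind⟩ := exists_nonneg_combination_linearIndepOn U fun j => (hlam j).le
  obtain ⟨w, hw, hwU, δ, hδ, hwν, hδU⟩ := exists_pos_combination_le_add U hν hlam hU hνU
  obtain ⟨c, hc, hμ, hz'⟩ := exists_sub_sum_mul_eq_sum_smul z u hw (hz.trans hwU.symm)
  refine ⟨fun t => z t - ∑ j, c j * u j t, ⟨_, fun j => (hμ j).1, hz'⟩, ?_,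
    ⟨fun j => c j, fun j => Int.cast_nonneg (hc j), by simpa using intCast_sum_mul c u⟩⟩
  set S := (support ν).toFinset
  have hlt : ((∑ t, (z t - ∑ j, c j * u j t) : ℤ) : ℝ) < ((∑ j ∈ S, ∑ t, u j t : ℤ) : ℝ) + 1 := by
    have := congrArg (fun x => ∑ t, x t) hz'
    push_cast at this ⊢
    rw [this, sum_sum_smul_apply]
    refine sum_mul_lt_sum_add_one S hU hδ (fun j => (hμ j).2) (fun j hj => ?_) hδU
    have hνj : ν j = 0 := by simpa [S] using hj
    linarith [hwν j, Int.cast_nonneg (R := ℝ) (hc j)]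
  have hSk : ∑ j ∈ S, ∑ t, u j t ≤ k * a :=
    hdim ▸ sum_le_finrank_span_mul U hsum (by simpa [S] using hind)
  exact (Int.lt_add_one_iff.mp (by exact_mod_cast hlt)).trans hSk

/-- Let `C ⊆ ℝ^n` be a polyhedral cone of dimension `k ≤ n` spanned by integer
vectors `u_1, …, u_m` with `0 ≤ Σ(u_j) ≤ a` for all `j`.  Then for every integer point `z` in
the relative interior `C⁰` of `C` (the points expressible with all coefficients positive),
there is an integer point `z' ∈ C⁰` with `Σ(z') ≤ k·a` and `z ∈ z' + C`. -/
theorem stmt_4 (n m k : ℕ) (hk : k ≤ n) (a : ℤ) (u : Fin m → Fin n → ℤ)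
    (hsum : ∀ j, 0 ≤ ∑ t, u j t ∧ ∑ t, u j t ≤ a)
    (hdim : Module.finrank ℝ
      (Submodule.span ℝ (Set.range fun j => fun t => (u j t : ℝ))) = k)
    (z : Fin n → ℤ)
    (hz : ∃ lam : Fin m → ℝ, (∀ j, 0 < lam j) ∧
      (fun t => (z t : ℝ)) = ∑ j, lam j • fun t => (u j t : ℝ)) :
    ∃ z' : Fin n → ℤ,
      (∃ lam : Fin m → ℝ, (∀ j, 0 < lam j) ∧
        (fun t => (z' t : ℝ)) = ∑ j, lam j • fun t => (u j t : ℝ)) ∧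
      (∑ t, z' t) ≤ (k : ℤ) * a ∧
      (∃ lam : Fin m → ℝ, (∀ j, 0 ≤ lam j) ∧
        (fun t => ((z t - z' t : ℤ) : ℝ)) = ∑ j, lam j • fun t => (u j t : ℝ)) :=
  stmt_4_general n m k a u hsum hdim z hz
end

section
/- Let Λ_1 ⊆ Λ_3 be two full-rank ℤ_p-lattices in ℚ_p^m and Λ_2 another full-rank lattice, where the distance between commensurable lattices Λ, Λ' is defined by p^{d(Λ,Λ')} = (Λ : Λ∩Λ')·(Λ' : Λ∩Λ'). Then d(Λ_1,Λ_2) + d(Λ_2,Λ_3) = d(Λ_1,Λ_3) if and only if Λ_1 ⊆ Λ_2 ⊆ Λ_3. -/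
/-- The index `(Λ : Λ ∩ Λ')` of the intersection of two `ℤ_p`-lattices in `Λ`,
as the cardinality of the quotient module `Λ / (Λ ∩ Λ')`. -/
noncomputable def latIdx (p m : ℕ) [Fact p.Prime]
    (L L' : Submodule ℤ_[p] (Fin m → ℚ_[p])) : ℕ :=
  Nat.card (↥L ⧸ (Submodule.comap L.subtype (L ⊓ L')))

/-!
Write `r(H, K) = [K : H ∩ K]`. For any `M ≤ H ∩ K` the tower law gives
`[H : M] · r(H, K) = [K : M] · r(K, H)`, so the ratio `r(K, H) / r(H, K)` is a quotient of
covolumes and its product around a triangle `Λ₁, Λ₂, Λ₃` is `1`. When `Λ₁ ≤ Λ₃` this turns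
`p^{d(Λ₁,Λ₂) + d(Λ₂,Λ₃)}` into `(Λ₁ : Λ₁∩Λ₂)² (Λ₂ : Λ₂∩Λ₃)² · p^{d(Λ₁,Λ₃)}`, and the squared
factor is `1` exactly when `Λ₁ ≤ Λ₂ ≤ Λ₃`.
-/

namespace AddSubgroup

variable {G : Type*} [AddGroup G]

theorem relIndex_mul_relIndex_of_le_inf {M H K : AddSubgroup G} (hM : M ≤ H ⊓ K) :
    M.relIndex H * H.relIndex K = M.relIndex K * K.relIndex H := by
  rw [← relIndex_mul_relIndex M (H ⊓ K) H hM inf_le_left,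
    ← relIndex_mul_relIndex M (H ⊓ K) K hM inf_le_right, inf_relIndex_left, inf_relIndex_right]
  ring

theorem relIndex_mul_relIndex_mul_relIndex_comm {H₁ H₂ H₃ : AddSubgroup G}
    (h₂ : H₂.relIndex H₁ ≠ 0) (h₃ : H₃.relIndex H₁ ≠ 0) :
    H₁.relIndex H₂ * H₂.relIndex H₃ * H₃.relIndex H₁ =
      H₂.relIndex H₁ * H₃.relIndex H₂ * H₁.relIndex H₃ := by
  set M := H₁ ⊓ H₂ ⊓ H₃
  have hM₁ : M ≤ H₁ := inf_le_left.trans inf_le_left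
  have hM₂ : M ≤ H₂ := inf_le_left.trans inf_le_right
  have hM₃ : M ≤ H₃ := inf_le_right
  have h₁₂ := relIndex_mul_relIndex_of_le_inf (le_inf hM₁ hM₂)
  have h₂₃ := relIndex_mul_relIndex_of_le_inf (le_inf hM₂ hM₃)
  have h₃₁ := relIndex_mul_relIndex_of_le_inf (le_inf hM₃ hM₁)
  have hM : M.relIndex H₁ ≠ 0 := relIndex_inf_ne_zero (relIndex_inf_ne_zero (by simp) h₂) h₃
  refine Nat.eq_of_mul_eq_mul_left (Nat.pos_of_ne_zero hM) ?_
  linear_combination H₂.relIndex H₃ * H₃.relIndex H₁ * h₁₂ +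
    H₂.relIndex H₁ * H₃.relIndex H₁ * h₂₃ + H₂.relIndex H₁ * H₃.relIndex H₂ * h₃₁

/-- `p ^ d(H, K) = (H : H ∩ K) · (K : H ∩ K)` in the paper's notation. -/
noncomputable def symmRelIndex (H K : AddSubgroup G) : ℕ :=
  K.relIndex H * H.relIndex K

theorem symmRelIndex_mul_symmRelIndex {H₁ H₂ H₃ : AddSubgroup G} (h₁₃ : H₁ ≤ H₃)
    (h₂ : H₂.relIndex H₁ ≠ 0) :
    symmRelIndex H₁ H₂ * symmRelIndex H₂ H₃ =
      (H₂.relIndex H₁ * H₃.relIndex H₂) ^ 2 * symmRelIndex H₁ H₃ := by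
  have h₃₁ : H₃.relIndex H₁ = 1 := relIndex_eq_one.mpr h₁₃
  have hcocycle := relIndex_mul_relIndex_mul_relIndex_comm h₂ (h₃₁ ▸ one_ne_zero)
  rw [h₃₁, mul_one] at hcocycle
  rw [symmRelIndex, symmRelIndex, symmRelIndex, h₃₁]
  linear_combination H₂.relIndex H₁ * H₃.relIndex H₂ * hcocycle

theorem symmRelIndex_mul_symmRelIndex_eq_iff {H₁ H₂ H₃ : AddSubgroup G} (h₁₃ : H₁ ≤ H₃)
    (h₁₂ : symmRelIndex H₁ H₂ ≠ 0) (h₁₃' : symmRelIndex H₁ H₃ ≠ 0) :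
    symmRelIndex H₁ H₂ * symmRelIndex H₂ H₃ = symmRelIndex H₁ H₃ ↔ H₁ ≤ H₂ ∧ H₂ ≤ H₃ := by
  rw [symmRelIndex_mul_symmRelIndex h₁₃ (left_ne_zero_of_mul h₁₂), mul_eq_right₀ h₁₃',
    sq_eq_one, mul_eq_one, relIndex_eq_one, relIndex_eq_one]

end AddSubgroup

section Lattice

variable {p m : ℕ} [Fact p.Prime]

theorem latIdx_eq_relIndex (L L' : Submodule ℤ_[p] (Fin m → ℚ_[p])) :
    latIdx p m L L' = L'.toAddSubgroup.relIndex L.toAddSubgroup := by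
  have hK : (Submodule.comap L.subtype (L ⊓ L')).toAddSubgroup =
      L'.toAddSubgroup.addSubgroupOf L.toAddSubgroup := by
    ext x
    rw [AddSubgroup.mem_addSubgroupOf]
    simp
  rw [AddSubgroup.relIndex, AddSubgroup.index, ← hK]
  rfl

theorem latIdx_mul_latIdx (L L' : Submodule ℤ_[p] (Fin m → ℚ_[p])) :
    latIdx p m L L' * latIdx p m L' L = L.toAddSubgroup.symmRelIndex L'.toAddSubgroup := by
  rw [latIdx_eq_relIndex, latIdx_eq_relIndex, AddSubgroup.symmRelIndex]

end Lattice

theorem stmt_5_general (p m : ℕ) [Fact p.Prime]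
    (L1 L2 L3 : Submodule ℤ_[p] (Fin m → ℚ_[p]))
    (h13 : L1 ≤ L3)
    (e12 e23 e13 : ℕ)
    (he12 : p ^ e12 = latIdx p m L1 L2 * latIdx p m L2 L1)
    (he23 : p ^ e23 = latIdx p m L2 L3 * latIdx p m L3 L2)
    (he13 : p ^ e13 = latIdx p m L1 L3 * latIdx p m L3 L1) :
    e12 + e23 = e13 ↔ (L1 ≤ L2 ∧ L2 ≤ L3) := by
  have hp : p.Prime := Fact.out
  rw [latIdx_mul_latIdx] at he12 he23 he13
  rw [← (Nat.pow_right_injective hp.two_le).eq_iff, pow_add, he12, he23, he13]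
  exact AddSubgroup.symmRelIndex_mul_symmRelIndex_eq_iff h13
    (he12 ▸ pow_ne_zero e12 hp.ne_zero)
    (he13 ▸ pow_ne_zero e13 hp.ne_zero)

/-- Let `Λ_1 ⊆ Λ_3` be full-rank `ℤ_p`-lattices in `ℚ_p^m` and `Λ_2` another
full-rank lattice.  With the distance `d(Λ,Λ')` defined by
`p^{d(Λ,Λ')} = (Λ : Λ∩Λ')·(Λ' : Λ∩Λ')`, we have
`d(Λ_1,Λ_2) + d(Λ_2,Λ_3) = d(Λ_1,Λ_3)` if and only if `Λ_1 ⊆ Λ_2 ⊆ Λ_3`. -/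
theorem stmt_5 (p m : ℕ) [Fact p.Prime]
    (L1 L2 L3 : Submodule ℤ_[p] (Fin m → ℚ_[p]))
    (hfg1 : L1.FG) (hfg2 : L2.FG) (hfg3 : L3.FG)
    (hfull1 : Submodule.span ℚ_[p] (L1 : Set (Fin m → ℚ_[p])) = ⊤)
    (hfull2 : Submodule.span ℚ_[p] (L2 : Set (Fin m → ℚ_[p])) = ⊤)
    (hfull3 : Submodule.span ℚ_[p] (L3 : Set (Fin m → ℚ_[p])) = ⊤)
    (h13 : L1 ≤ L3)
    (e12 e23 e13 : ℕ)
    (he12 : p ^ e12 = latIdx p m L1 L2 * latIdx p m L2 L1)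
    (he23 : p ^ e23 = latIdx p m L2 L3 * latIdx p m L3 L2)
    (he13 : p ^ e13 = latIdx p m L1 L3 * latIdx p m L3 L1) :
    e12 + e23 = e13 ↔ (L1 ≤ L2 ∧ L2 ≤ L3) :=
  stmt_5_general p m L1 L2 L3 h13 e12 e23 e13 he12 he23 he13
end

section
/- Let p be a prime and F ∈ ℤ[x_0,x_1,x_2] a ternary form of degree d written F = Σ_{i+j+k=d} a_{i,j,k} x_0^i x_1^j x_2^k. Suppose that for some integers 0 ≤ w_1 ≤ w_2 with w_2 > 0, v_p(F(x_0, p^{w_1}x_1, p^{w_2}x_2)) > d(w_1+w_2)/3. Set t = w_1/w_2. Then v_p(F(x_0, p x_1, p x_2)) > (1+t)·d/3. -/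
open MvPolynomial


lemma aeval_scale_monomial (c1 c2 : ℤ) (m' : Fin 3 →₀ ℕ) (a : ℤ) :
    aeval ![(X 0 : MvPolynomial (Fin 3) ℤ), c1 • X 1, c2 • X 2] (monomial m' a)
      = monomial m' (c1 ^ m' 1 * c2 ^ m' 2 * a) := by
  rw [aeval_monomial, Finsupp.prod_fintype _ _ (fun i => pow_zero _), Fin.prod_univ_three]
  simp only [Matrix.cons_val_zero, Matrix.cons_val_one, Matrix.head_cons,
    Matrix.cons_val_two, Matrix.tail_cons, smul_pow, algebraMap_eq]
  rw [monomial_eq, Finsupp.prod_fintype _ _ (fun i => pow_zero _), Fin.prod_univ_three]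
  rw [smul_eq_C_mul, smul_eq_C_mul]
  simp only [map_mul]
  ring

lemma coeff_aeval_scale (c1 c2 : ℤ) (F : MvPolynomial (Fin 3) ℤ) (m : Fin 3 →₀ ℕ) :
    coeff m (aeval ![(X 0 : MvPolynomial (Fin 3) ℤ), c1 • X 1, c2 • X 2] F)
      = c1 ^ m 1 * c2 ^ m 2 * coeff m F := by
  conv_lhs => rw [F.as_sum]
  rw [map_sum, coeff_sum]
  simp only [aeval_scale_monomial, coeff_monomial]
  rw [Finset.sum_eq_single m]
  · rw [if_pos rfl]
  · intro b _ hb; rw [if_neg hb]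
  · intro hm; rw [if_pos rfl, notMem_support_iff.mp hm, mul_zero]

lemma padicValInt_pow_mul (p : ℕ) (hp : p.Prime) (n : ℕ) {a : ℤ} (ha : a ≠ 0) :
    padicValInt p ((p : ℤ) ^ n * a) = n + padicValInt p a := by
  have hpz : ((p : ℤ)) ^ n ≠ 0 := pow_ne_zero _ (by exact_mod_cast hp.ne_zero)
  haveI : Fact p.Prime := ⟨hp⟩
  rw [padicValInt.mul hpz ha]
  congr 1
  have : ((p : ℤ)) ^ n = ((p ^ n : ℕ) : ℤ) := by push_cast; ring
  rw [this, padicValInt.of_nat, padicValNat.prime_pow]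

/-- If `F` is a ternary form of degree `d` with
`v_p(F(x_0, p^{w_1}x_1, p^{w_2}x_2)) > d(w_1+w_2)/3` for some `0 ≤ w_1 ≤ w_2`, `w_2 > 0`, then
`v_p(F(x_0, p x_1, p x_2)) > (1+t)·d/3` where `t = w_1/w_2`.  Here `v_p` of a polynomial is
the minimum of the `p`-adic valuations of its coefficients (hence the bounds are imposed on
every coefficient in the support). -/
theorem stmt_6 (p : ℕ) (hp : p.Prime) (d w1 w2 : ℕ) (hw : w1 ≤ w2) (hw2 : 0 < w2)
    (F : MvPolynomial (Fin 3) ℤ) (hF : F.IsHomogeneous d)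
    (hunst : ∀ m ∈ (aeval
        ![(X 0 : MvPolynomial (Fin 3) ℤ), (p : ℤ) ^ w1 • X 1, (p : ℤ) ^ w2 • X 2] F).support,
      (d : ℚ) * (w1 + w2) / 3 <
        (padicValInt p ((aeval
          ![(X 0 : MvPolynomial (Fin 3) ℤ), (p : ℤ) ^ w1 • X 1, (p : ℤ) ^ w2 • X 2] F).coeff m) : ℚ)) :
    ∀ m ∈ (aeval
        ![(X 0 : MvPolynomial (Fin 3) ℤ), (p : ℤ) • X 1, (p : ℤ) • X 2] F).support,
      (1 + (w1 : ℚ) / w2) * d / 3 <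
        (padicValInt p ((aeval
          ![(X 0 : MvPolynomial (Fin 3) ℤ), (p : ℤ) • X 1, (p : ℤ) • X 2] F).coeff m) : ℚ) := by
  intro m hm
  have hpz : ((p : ℤ)) ≠ 0 := by exact_mod_cast hp.ne_zero
  set j := m 1 with hj
  set k := m 2 with hk
  -- coefficient of the second polynomial
  have h2 : coeff m (aeval ![(X 0 : MvPolynomial (Fin 3) ℤ), (p : ℤ) • X 1, (p : ℤ) • X 2] F)
      = (p : ℤ) ^ (j + k) * coeff m F := by
    rw [coeff_aeval_scale, pow_add]
  have hFm : coeff m F ≠ 0 := by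
    intro h
    apply mem_support_iff.mp hm
    rw [h2, h, mul_zero]
  -- coefficient of the first polynomial
  have h1 : coeff m (aeval
      ![(X 0 : MvPolynomial (Fin 3) ℤ), (p : ℤ) ^ w1 • X 1, (p : ℤ) ^ w2 • X 2] F)
      = (p : ℤ) ^ (w1 * j + w2 * k) * coeff m F := by
    rw [coeff_aeval_scale, pow_add, pow_mul, pow_mul]
  have hm1 : m ∈ (aeval
      ![(X 0 : MvPolynomial (Fin 3) ℤ), (p : ℤ) ^ w1 • X 1, (p : ℤ) ^ w2 • X 2] F).support := by
    rw [mem_support_iff, h1]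
    exact mul_ne_zero (pow_ne_zero _ hpz) hFm
  have key := hunst m hm1
  rw [h1, padicValInt_pow_mul p hp _ hFm] at key
  rw [h2, padicValInt_pow_mul p hp _ hFm]
  set v := padicValInt p (coeff m F) with hv
  -- now pure arithmetic
  have hw2q : (0 : ℚ) < w2 := by exact_mod_cast hw2
  have hwq : (w1 : ℚ) ≤ w2 := by exact_mod_cast hw
  have h1w2 : (1 : ℚ) ≤ w2 := by exact_mod_cast hw2
  have hvq : (0 : ℚ) ≤ v := Nat.cast_nonneg v
  have hjq : (0 : ℚ) ≤ j := Nat.cast_nonneg j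
  have hkq : (0 : ℚ) ≤ k := Nat.cast_nonneg k
  have keyq : (d : ℚ) * (w1 + w2) / 3 < (w1 : ℚ) * j + w2 * k + v := by
    calc (d : ℚ) * (w1 + w2) / 3 < ((w1 * j + w2 * k + v : ℕ) : ℚ) := key
    _ = (w1 : ℚ) * j + w2 * k + v := by push_cast; ring
  have goalcast : ((j + k + v : ℕ) : ℚ) = (j : ℚ) + k + v := by push_cast; ring
  rw [goalcast]
  have hle : (w1 : ℚ) * j + w2 * k + v ≤ ((j : ℚ) + k + v) * w2 := by nlinarith
  have heq : (1 + (w1 : ℚ) / w2) * d / 3 = ((d : ℚ) * (w1 + w2) / 3) / w2 := by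
    field_simp; ring
  rw [heq]
  calc ((d : ℚ) * (w1 + w2) / 3) / w2 < ((w1 : ℚ) * j + w2 * k + v) / w2 :=
        by apply div_lt_div_of_pos_right keyq hw2q
  _ ≤ (j : ℚ) + k + v := by rw [div_le_iff₀ hw2q]; exact hle
end

section
/- Let p be prime, w = (w_0,…,w_n) ∈ ℤ_{≥0}^{n+1}, M_w = diag(p^{w_0},…,p^{w_n}), and let T ∈ GL(n+1, ℤ) satisfy M_w T M_w^{-1} ∈ GL(n+1, ℤ). Then for every homogeneous F ∈ ℤ[x_0,…,x_n], v_p(F'(p^{w_0}x_0,…,p^{w_n}x_n)) = v_p(F(p^{w_0}x_0,…,p^{w_n}x_n)), where F' = F((x_0,…,x_n)·T). -/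
open MvPolynomial
open scoped MatrixGroups

namespace Stmt9Aux

variable {n : ℕ}

/-- Substitution `x_k ↦ ∑ j, A j k • x_j`. -/
noncomputable def sub (A : Matrix (Fin (n + 1)) (Fin (n + 1)) ℤ) :
    MvPolynomial (Fin (n + 1)) ℤ →ₐ[ℤ] MvPolynomial (Fin (n + 1)) ℤ :=
  aeval (fun k => ∑ j, A j k • (X j : MvPolynomial (Fin (n + 1)) ℤ))

lemma sub_sub (A B : Matrix (Fin (n + 1)) (Fin (n + 1)) ℤ)
    (F : MvPolynomial (Fin (n + 1)) ℤ) :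
    sub B (sub A F) = sub (B * A) F := by
  show ((sub B).comp (sub A)) F = _
  unfold sub
  rw [comp_aeval]
  have h : (fun i => (aeval fun k => ∑ j, B j k • (X j : MvPolynomial (Fin (n + 1)) ℤ))
      (∑ j, A j i • (X j : MvPolynomial (Fin (n + 1)) ℤ)))
      = fun k => ∑ j, (B * A) j k • (X j : MvPolynomial (Fin (n + 1)) ℤ) := by
    funext k
    simp only [map_sum, map_smul, aeval_X, Finset.smul_sum, smul_smul]
    rw [Finset.sum_comm]
    refine Finset.sum_congr rfl fun i _ => ?_
    rw [← Finset.sum_smul]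
    congr 1
    rw [Matrix.mul_apply]
    exact Finset.sum_congr rfl fun j _ => mul_comm _ _
  rw [h]

lemma sub_one (F : MvPolynomial (Fin (n + 1)) ℤ) : sub 1 F = F := by
  unfold sub
  have : (fun k => ∑ j, (1 : Matrix (Fin (n + 1)) (Fin (n + 1)) ℤ) j k •
      (X j : MvPolynomial (Fin (n + 1)) ℤ)) = X := by
    funext k
    simp [Matrix.one_apply, ite_smul]
  rw [this, aeval_X_left, AlgHom.id_apply]

lemma dvd_coeff_sub (A : Matrix (Fin (n + 1)) (Fin (n + 1)) ℤ) (c : ℤ)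
    (G : MvPolynomial (Fin (n + 1)) ℤ) (h : ∀ m, c ∣ G.coeff m) :
    ∀ m, c ∣ (sub A G).coeff m := by
  rw [← C_dvd_iff_dvd_coeff] at h ⊢
  obtain ⟨G', rfl⟩ := h
  refine ⟨sub A G', ?_⟩
  rw [map_mul]
  congr 1
  simp [sub]

lemma dvd_coeff_sub_iff (U : GL (Fin (n + 1)) ℤ) (c : ℤ)
    (G : MvPolynomial (Fin (n + 1)) ℤ) :
    (∀ m, c ∣ (sub (U : Matrix (Fin (n + 1)) (Fin (n + 1)) ℤ) G).coeff m) ↔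
    (∀ m, c ∣ G.coeff m) := by
  constructor
  · intro h
    have := dvd_coeff_sub ((U⁻¹ : GL (Fin (n + 1)) ℤ) : Matrix (Fin (n + 1)) (Fin (n + 1)) ℤ) c _ h
    rwa [sub_sub, ← Units.val_mul, inv_mul_cancel, Units.val_one, sub_one] at this
  · exact dvd_coeff_sub _ _ _

end Stmt9Aux

/-- Let `M_w = diag(p^{w_0},…,p^{w_n})` and let `T ∈ GL(n+1,ℤ)` be such that
`M_w T M_w^{-1} ∈ GL(n+1,ℤ)`.  Then for every homogeneous `F ∈ ℤ[x_0,…,x_n]`,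
`v_p(F'(p^{w_0}x_0,…,p^{w_n}x_n)) = v_p(F(p^{w_0}x_0,…,p^{w_n}x_n))`, where
`F' = F((x_0,…,x_n)·T)`.  Equality of the minimal coefficient valuations is expressed by
saying that for every `c`, `p^c` divides all coefficients of one iff of the other. -/
theorem stmt_9 (p : ℕ) (hp : p.Prime) (n : ℕ) (w : Fin (n + 1) → ℕ)
    (T S : GL (Fin (n + 1)) ℤ)
    (hTS : (Matrix.diagonal fun j => (p : ℚ) ^ (w j)) *
        ((T : Matrix (Fin (n + 1)) (Fin (n + 1)) ℤ).map (Int.cast : ℤ → ℚ)) *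
        (Matrix.diagonal fun j => (p : ℚ) ^ (w j))⁻¹ =
        ((S : Matrix (Fin (n + 1)) (Fin (n + 1)) ℤ).map (Int.cast : ℤ → ℚ)))
    (d : ℕ) (F : MvPolynomial (Fin (n + 1)) ℤ) (hF : F.IsHomogeneous d) :
    ∀ c : ℕ,
      (∀ m : Fin (n + 1) →₀ ℕ, (p : ℤ) ^ c ∣
        (aeval (fun j => (p : ℤ) ^ (w j) • (X j : MvPolynomial (Fin (n + 1)) ℤ))
          (aeval (fun k => ∑ j, ((T : Matrix (Fin (n + 1)) (Fin (n + 1)) ℤ) j k) •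
            (X j : MvPolynomial (Fin (n + 1)) ℤ)) F)).coeff m)
      ↔ (∀ m : Fin (n + 1) →₀ ℕ, (p : ℤ) ^ c ∣
        (aeval (fun j => (p : ℤ) ^ (w j) • (X j : MvPolynomial (Fin (n + 1)) ℤ)) F).coeff m) := by
  intro c
  set D : Matrix (Fin (n + 1)) (Fin (n + 1)) ℤ :=
    Matrix.diagonal (fun j => (p : ℤ) ^ (w j)) with hD
  -- the diagonal substitution coincides with `sub D`
  have hDsub : (aeval (fun j => (p : ℤ) ^ (w j) • (X j : MvPolynomial (Fin (n + 1)) ℤ)) :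
      MvPolynomial (Fin (n + 1)) ℤ →ₐ[ℤ] MvPolynomial (Fin (n + 1)) ℤ) = Stmt9Aux.sub D := by
    unfold Stmt9Aux.sub
    congr 1
    funext k
    rw [Finset.sum_eq_single k]
    · simp [hD]
    · intro j _ hj
      simp [hD, Matrix.diagonal_apply_ne _ hj]
    · simp
  -- invertibility of the rational diagonal matrix
  have hpQ : (p : ℚ) ≠ 0 := Nat.cast_ne_zero.mpr hp.pos.ne'
  have hM : IsUnit (Matrix.diagonal fun j => (p : ℚ) ^ (w j)).det := by
    rw [Matrix.det_diagonal]
    exact isUnit_iff_ne_zero.mpr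
      (Finset.prod_ne_zero_iff.mpr fun j _ => pow_ne_zero _ hpQ)
  -- from hTS : M T M⁻¹ = S, get M T = S M over ℚ
  have hMT : (Matrix.diagonal fun j => (p : ℚ) ^ (w j)) *
      ((T : Matrix (Fin (n + 1)) (Fin (n + 1)) ℤ).map (Int.cast : ℤ → ℚ)) =
      ((S : Matrix (Fin (n + 1)) (Fin (n + 1)) ℤ).map (Int.cast : ℤ → ℚ)) *
        (Matrix.diagonal fun j => (p : ℚ) ^ (w j)) := by
    have h := congrArg (· * (Matrix.diagonal fun j => (p : ℚ) ^ (w j))) hTS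
    simpa [Matrix.mul_assoc, Matrix.nonsing_inv_mul _ hM] using h
  -- entrywise, over ℤ
  have hentry : ∀ j k, (p : ℤ) ^ (w j) * (T : Matrix (Fin (n + 1)) (Fin (n + 1)) ℤ) j k =
      (S : Matrix (Fin (n + 1)) (Fin (n + 1)) ℤ) j k * (p : ℤ) ^ (w k) := by
    intro j k
    have h := congrFun (congrFun hMT j) k
    rw [Matrix.diagonal_mul, Matrix.mul_diagonal] at h
    simp only [Matrix.map_apply] at h
    exact_mod_cast h
  have hDT : D * (T : Matrix (Fin (n + 1)) (Fin (n + 1)) ℤ) =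
      (S : Matrix (Fin (n + 1)) (Fin (n + 1)) ℤ) * D := by
    ext j k
    rw [hD, Matrix.diagonal_mul, Matrix.mul_diagonal]
    exact hentry j k
  have hTsub : (aeval (fun k => ∑ j, ((T : Matrix (Fin (n + 1)) (Fin (n + 1)) ℤ) j k) •
      (X j : MvPolynomial (Fin (n + 1)) ℤ)) :
      MvPolynomial (Fin (n + 1)) ℤ →ₐ[ℤ] MvPolynomial (Fin (n + 1)) ℤ) =
      Stmt9Aux.sub (T : Matrix (Fin (n + 1)) (Fin (n + 1)) ℤ) := rfl
  rw [hDsub, hTsub]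
  have key : Stmt9Aux.sub D (Stmt9Aux.sub (T : Matrix (Fin (n + 1)) (Fin (n + 1)) ℤ) F) =
      Stmt9Aux.sub (S : Matrix (Fin (n + 1)) (Fin (n + 1)) ℤ) (Stmt9Aux.sub D F) := by
    rw [Stmt9Aux.sub_sub, Stmt9Aux.sub_sub, hDT]
  rw [key]
  exact Stmt9Aux.dvd_coeff_sub_iff S ((p : ℤ) ^ c) (Stmt9Aux.sub D F)
end

section
/- Let p be prime and F ∈ ℤ[x_0,x_1,x_2,x_3] a primitive cubic form (gcd of coefficients 1). Then there exists T ∈ GL(4, ℤ) with v_p(F((x_0,x_1,x_2,x_3)·T) evaluated at (x_0,x_1,x_2,p·x_3)) ≥ 1 if and only if the reduction F̄ ∈ 𝔽_p[x_0,…,x_3] has a linear factor. -/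
/-!
After the change of variables `T`, substituting `x₃ ↦ p x₃` and reducing mod `p` is the same as
setting `x₃ = 0` in `F̄ ∘ T̄`, so the left-hand side says that `x₃` divides `F̄ ∘ T̄`; pulling back
along `T̄⁻¹`, this is a linear factor of `F̄`. Conversely, any nonzero linear form over `𝔽_p` is
carried to a multiple of `x₃` by the reduction of some `T ∈ GL₄(ℤ)`: a unipotent matrix clears
all coordinates but a nonzero pivot, and a transposition moves the pivot to position `3`.
-/

open MvPolynomial Matrix
open scoped MatrixGroups

namespace MvPolynomial

variable {σ R : Type*} [CommRing R]

theorem X_dvd_iff_aeval_update_X_eq_zero [DecidableEq σ] {i : σ} {f : MvPolynomial σ R} :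
    X i ∣ f ↔ aeval (Function.update X i 0 : σ → MvPolynomial σ R) f = 0 := by
  constructor
  · rintro ⟨q, rfl⟩
    simp
  · intro h
    rw [X_dvd_iff_modMonomial_eq_zero]
    have hvars : ((f.modMonomial (Finsupp.single i 1)).vars : Set σ) ⊆ {i}ᶜ := by
      intro j hj hji
      obtain ⟨m, hm, hjm⟩ := (mem_vars_iff_mem_support _).mp hj
      rw [Set.mem_singleton_iff.mp hji] at hjm
      refine mem_support_iff.mp hm (coeff_modMonomial_of_le _ ?_)
      rw [Finsupp.single_le_iff]
      exact Nat.one_le_iff_ne_zero.mpr (Finsupp.mem_support_iff.mp hjm)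
    have hupdate : (fun j => if j ∈ ({i}ᶜ : Set σ) then X j else 0) =
        (Function.update X i 0 : σ → MvPolynomial σ R) := by
      funext j
      by_cases hj : j = i <;> simp [hj]
    rw [← aeval_ite_mem_eq_self _ hvars, hupdate]
    have hsplit := congrArg (aeval (Function.update X i 0 : σ → MvPolynomial σ R))
      (divMonomial_add_modMonomial_single f i)
    rwa [map_add, map_mul, aeval_X, Function.update_self, zero_mul, zero_add, h] at hsplit

theorem map_intCastRingHom_eq_zero_iff {n : ℕ} {f : MvPolynomial σ ℤ} :
    map (Int.castRingHom (ZMod n)) f = 0 ↔ ∀ m, (n : ℤ) ∣ f.coeff m := by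
  simp [MvPolynomial.ext_iff, coeff_map, ZMod.intCast_zmod_eq_zero_iff_dvd]

variable [Fintype σ]

theorem IsHomogeneous.exists_eq_sum_smul_X {f : MvPolynomial σ R} (h : f.IsHomogeneous 1) :
    ∃ a : σ → R, f = ∑ i, a i • X i := by
  refine ⟨fun i => coeff 0 (pderiv i f), ?_⟩
  have hconst (i : σ) : pderiv i f = C (coeff 0 (pderiv i f)) :=
    totalDegree_eq_zero_iff_eq_C.mp ((totalDegree_zero_iff_isHomogeneous σ).mpr h.pderiv)
  conv_lhs => rw [← one_smul ℕ f, ← h.sum_X_mul_pderiv]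
  refine Finset.sum_congr rfl fun i _ => ?_
  rw [hconst i, smul_eq_C_mul, mul_comm]

theorem isHomogeneous_sum_smul_X (b : σ → R) :
    (∑ j, b j • (X j : MvPolynomial σ R)).IsHomogeneous 1 :=
  IsHomogeneous.sum _ _ _ fun j _ => by rw [smul_eq_C_mul]; exact isHomogeneous_C_mul_X _ _

theorem X_dvd_sum_smul_X {b : σ → R} {t : σ} (hb : ∀ j ≠ t, b j = 0) :
    X t ∣ ∑ j, b j • (X j : MvPolynomial σ R) := by
  rw [Finset.sum_eq_single t (fun j _ hj => by rw [hb j hj, zero_smul]) (by simp), smul_eq_C_mul]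
  exact dvd_mul_left _ _

/-- `f ↦ f(x A)`, with `x` the row vector of variables. -/
noncomputable def linearSubst (A : Matrix σ σ R) : MvPolynomial σ R →ₐ[R] MvPolynomial σ R :=
  aeval fun k => ∑ j, A j k • X j

theorem linearSubst_X (A : Matrix σ σ R) (k : σ) : linearSubst A (X k) = ∑ j, A j k • X j :=
  aeval_X _ _

theorem linearSubst_sum_smul_X (A : Matrix σ σ R) (a : σ → R) :
    linearSubst A (∑ k, a k • X k) = ∑ j, (A *ᵥ a) j • X j := by
  simp only [map_sum, map_smul, linearSubst_X, Finset.smul_sum, smul_smul, mulVec, dotProduct,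
    Finset.sum_smul]
  rw [Finset.sum_comm]
  simp_rw [mul_comm]

theorem linearSubst_linearSubst (A B : Matrix σ σ R) (f : MvPolynomial σ R) :
    linearSubst A (linearSubst B f) = linearSubst (A * B) f := by
  rw [← AlgHom.comp_apply]
  congr 1
  ext k : 1
  rw [AlgHom.comp_apply, linearSubst_X, linearSubst_X, linearSubst_sum_smul_X]
  rfl

theorem linearSubst_one [DecidableEq σ] (f : MvPolynomial σ R) : linearSubst 1 f = f := by
  have hX : (fun k => ∑ j, (1 : Matrix σ σ R) j k • (X j : MvPolynomial σ R)) = X := by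
    funext k
    simp [one_apply, ite_smul]
  rw [linearSubst, hX, aeval_X_left_apply]

theorem linearSubst_inv_linearSubst [DecidableEq σ] (U : GL σ R) (f : MvPolynomial σ R) :
    linearSubst ↑U⁻¹ (linearSubst ↑U f) = f := by
  rw [linearSubst_linearSubst, ← Units.val_mul, inv_mul_cancel, Units.val_one, linearSubst_one]

theorem linearSubst_injective [DecidableEq σ] (U : GL σ R) :
    Function.Injective (linearSubst (U : Matrix σ σ R)) :=
  Function.LeftInverse.injective (linearSubst_inv_linearSubst U)

theorem map_linearSubst {S : Type*} [CommRing S] (φ : R →+* S) (A : Matrix σ σ R)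
    (f : MvPolynomial σ R) : map φ (linearSubst A f) = linearSubst (A.map φ) (map φ f) := by
  rw [linearSubst, linearSubst, aeval_eq_bind₁, aeval_eq_bind₁, map_bind₁]
  congr 2 with k
  simp [map_sum, smul_eq_C_mul]

end MvPolynomial

namespace Matrix

variable {σ R K : Type*} [DecidableEq σ] [CommRing R] [Field K]

theorem map_permMatrix (f : R →+* K) (e : Equiv.Perm σ) :
    (e.permMatrix R).map f = e.permMatrix K := by
  ext j k
  simp [Equiv.Perm.permMatrix, PEquiv.toMatrix_apply, apply_ite f]

variable [Fintype σ]

/-- The unipotent matrix `1 - c ⊗ eᵢ`, with `c` lifting `a / a i` off the pivot, clears every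
coordinate of `a` but the `i`-th. -/
theorem exists_GL_map_mulVec_eq_zero_of_ne_zero (f : R →+* K) (hf : Function.Surjective f)
    {a : σ → K} {i : σ} (hai : a i ≠ 0) :
    ∃ U : GL σ R, ∀ j ≠ i, ((U : Matrix σ σ R).map f *ᵥ a) j = 0 := by
  choose c hc using fun j => hf (a j / a i)
  set N := vecMulVec (Function.update c i 0) (Pi.single i 1)
  have hN : IsNilpotent N := ⟨2, by
    rw [pow_two, vecMulVec_mul_vecMulVec, single_dotProduct, one_mul, Function.update_self,
      zero_smul, vecMulVec_zero]⟩
  refine ⟨hN.isUnit_one_sub.unit, fun j hj => ?_⟩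
  simp [N, mulVec, dotProduct, vecMulVec_apply, Pi.single_apply, one_apply, apply_ite f, hj, hc,
    sub_mul, ite_mul, Finset.sum_sub_distrib, hai]

theorem exists_GL_map_mulVec_eq_zero (f : R →+* K) (hf : Function.Surjective f)
    {a : σ → K} (ha : a ≠ 0) (t : σ) :
    ∃ T : GL σ R, ∀ j ≠ t, ((T : Matrix σ σ R).map f *ᵥ a) j = 0 := by
  obtain ⟨i, hi⟩ := Function.ne_iff.mp ha
  set e := Equiv.swap i t
  obtain ⟨U, hU⟩ := exists_GL_map_mulVec_eq_zero_of_ne_zero f hf (a := a ∘ e) (i := t)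
    (by simpa [e] using hi)
  refine ⟨U * (permMatrixHom (n := σ) (R := R)).toHomUnits e, fun j hj => ?_⟩
  rw [Units.val_mul, Matrix.map_mul, ← mulVec_mulVec, MonoidHom.coe_toHomUnits,
    permMatrixHom_apply, map_permMatrix, permMatrix_mulVec, Equiv.swap_inv]
  exact hU j hj

end Matrix

theorem forall_dvd_coeff_aeval_smul_X_three_iff (p : ℕ) (A : Matrix (Fin 4) (Fin 4) ℤ)
    (F : MvPolynomial (Fin 4) ℤ) :
    (∀ m, (p : ℤ) ∣ (aeval ![(X 0 : MvPolynomial (Fin 4) ℤ), X 1, X 2, (p : ℤ) • X 3]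
      (linearSubst A F)).coeff m) ↔
    X 3 ∣ linearSubst (A.map (Int.castRingHom (ZMod p))) (F.map (Int.castRingHom (ZMod p))) := by
  rw [← map_intCastRingHom_eq_zero_iff, aeval_eq_bind₁, map_bind₁, map_linearSubst,
    X_dvd_iff_aeval_update_X_eq_zero, aeval_eq_bind₁]
  congr! with k
  fin_cases k <;> simp

theorem stmt_12_general (p : ℕ) [hp : Fact p.Prime]
    (F : MvPolynomial (Fin 4) ℤ) :
    (∃ T : GL (Fin 4) ℤ, ∀ m : Fin 4 →₀ ℕ, (p : ℤ) ∣
      (aeval ![(X 0 : MvPolynomial (Fin 4) ℤ), X 1, X 2, (p : ℤ) • X 3]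
        (aeval (fun k => ∑ j, ((T : Matrix (Fin 4) (Fin 4) ℤ) j k) •
          (X j : MvPolynomial (Fin 4) ℤ)) F)).coeff m)
    ↔ ∃ L G : MvPolynomial (Fin 4) (ZMod p), L ≠ 0 ∧ L.IsHomogeneous 1 ∧
        F.map (Int.castRingHom (ZMod p)) = L * G := by
  set φ := Int.castRingHom (ZMod p)
  constructor
  · rintro ⟨T, hT⟩
    obtain ⟨q, hq⟩ := (forall_dvd_coeff_aeval_smul_X_three_iff p T F).mp hT
    set U := GeneralLinearGroup.map φ T
    have hU : (U : Matrix (Fin 4) (Fin 4) (ZMod p)) = (T : Matrix (Fin 4) (Fin 4) ℤ).map φ := rfl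
    rw [← hU] at hq
    refine ⟨linearSubst ↑U⁻¹ (X 3), linearSubst ↑U⁻¹ q, ?_, ?_, ?_⟩
    · exact (map_ne_zero_iff _ (linearSubst_injective U⁻¹)).mpr (X_ne_zero 3)
    · rw [linearSubst_X]
      exact isHomogeneous_sum_smul_X _
    · rw [← map_mul, ← hq, linearSubst_inv_linearSubst]
  · rintro ⟨L, G, hL0, hL1, hFLG⟩
    obtain ⟨a, rfl⟩ := hL1.exists_eq_sum_smul_X
    have ha : a ≠ 0 := by
      rintro rfl
      simp at hL0
    obtain ⟨T, hT⟩ := exists_GL_map_mulVec_eq_zero φ ZMod.intCast_surjective ha 3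
    refine ⟨T, (forall_dvd_coeff_aeval_smul_X_three_iff p T F).mpr ?_⟩
    rw [hFLG, map_mul, linearSubst_sum_smul_X]
    exact (X_dvd_sum_smul_X hT).mul_right _

/-- For a primitive cubic form `F ∈ ℤ[x_0,x_1,x_2,x_3]` and a prime `p`, there
is `T ∈ GL(4,ℤ)` with `v_p(F((x)·T)(x_0,x_1,x_2,p·x_3)) ≥ 1` (i.e. `p` divides every
coefficient of the substituted form) if and only if the reduction `F̄ ∈ 𝔽_p[x_0,…,x_3]` has a
linear factor. -/
theorem stmt_12 (p : ℕ) [hp : Fact p.Prime]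
    (F : MvPolynomial (Fin 4) ℤ) (hF : F.IsHomogeneous 3)
    (hprim : ∀ c : ℤ, (∀ m, c ∣ F.coeff m) → IsUnit c) :
    (∃ T : GL (Fin 4) ℤ, ∀ m : Fin 4 →₀ ℕ, (p : ℤ) ∣
      (aeval ![(X 0 : MvPolynomial (Fin 4) ℤ), X 1, X 2, (p : ℤ) • X 3]
        (aeval (fun k => ∑ j, ((T : Matrix (Fin 4) (Fin 4) ℤ) j k) •
          (X j : MvPolynomial (Fin 4) ℤ)) F)).coeff m)
    ↔ ∃ L G : MvPolynomial (Fin 4) (ZMod p), L ≠ 0 ∧ L.IsHomogeneous 1 ∧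
        F.map (Int.castRingHom (ZMod p)) = L * G :=
  stmt_12_general p (hp := hp) F
end

section
/- Let k be a field and F ∈ k[x_0,x_1,x_2,x_3] a nonzero cubic form defining a surface X ⊆ ℙ³_k that does not contain any plane defined over k. If P_1, P_2, P_3 are three distinct singular k-points of X lying on a common line L, then every point of L is a singular point of X. -/
/-!
Parametrise the line by `(s, t) ↦ s • A + t • B` and pull everything back to binary forms.
Each `∂F/∂xⱼ` pulls back to a binary quadratic form vanishing at three pairwise non-proportional
points, hence to zero; so `∂F/∂xⱼ` vanishes on the whole line. By the chain rule the pulled-back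
cubic `G` then has zero gradient, which kills its mixed coefficients and leaves
`G = a s³ + d t³` with `3a = 3d = 0`; vanishing at two non-proportional points forces `a = d = 0`
in every characteristic.
-/

open MvPolynomial Finset Finsupp

section Scalars

variable {R : Type*} [CommRing R] [NoZeroDivisors R]

theorem binary_quadratic_coeffs_eq_zero {α β γ s₁ t₁ s₂ t₂ s₃ t₃ : R}
    (h₁₂ : s₁ * t₂ - s₂ * t₁ ≠ 0) (h₁₃ : s₁ * t₃ - s₃ * t₁ ≠ 0) (h₂₃ : s₂ * t₃ - s₃ * t₂ ≠ 0)
    (e₁ : α * s₁ ^ 2 + β * s₁ * t₁ + γ * t₁ ^ 2 = 0)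
    (e₂ : α * s₂ ^ 2 + β * s₂ * t₂ + γ * t₂ ^ 2 = 0)
    (e₃ : α * s₃ ^ 2 + β * s₃ * t₃ + γ * t₃ ^ 2 = 0) :
    α = 0 ∧ β = 0 ∧ γ = 0 := by
  have hD : (s₁ * t₂ - s₂ * t₁) * (s₁ * t₃ - s₃ * t₁) * (s₂ * t₃ - s₃ * t₂) ≠ 0 :=
    mul_ne_zero (mul_ne_zero h₁₂ h₁₃) h₂₃
  refine ⟨?_, ?_, ?_⟩ <;> refine (mul_eq_zero.mp ?_).resolve_right hD
  · linear_combination (t₂ * t₃ * (s₂ * t₃ - s₃ * t₂)) * e₁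
      - (t₁ * t₃ * (s₁ * t₃ - s₃ * t₁)) * e₂ + (t₁ * t₂ * (s₁ * t₂ - s₂ * t₁)) * e₃
  · linear_combination (-(s₂ * t₃ - s₃ * t₂) * (s₂ * t₃ + s₃ * t₂)) * e₁
      + ((s₁ * t₃ - s₃ * t₁) * (s₁ * t₃ + s₃ * t₁)) * e₂
      - ((s₁ * t₂ - s₂ * t₁) * (s₁ * t₂ + s₂ * t₁)) * e₃
  · linear_combination (s₂ * s₃ * (s₂ * t₃ - s₃ * t₂)) * e₁
      - (s₁ * s₃ * (s₁ * t₃ - s₃ * t₁)) * e₂ + (s₁ * s₂ * (s₁ * t₂ - s₂ * t₁)) * e₃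

/- `(s₁t₂ - s₂t₁)³ = (s₁t₂)³ - (s₂t₁)³ - 3 s₁t₂s₂t₁ (s₁t₂ - s₂t₁)`, and the last term is
killed by `3a = 0` (resp. `3d = 0`). -/
theorem cubic_coeffs_eq_zero_of_three_mul_eq_zero {a d s₁ t₁ s₂ t₂ : R}
    (h3a : a * 3 = 0) (h3d : d * 3 = 0) (h₁₂ : s₁ * t₂ - s₂ * t₁ ≠ 0)
    (e₁ : a * s₁ ^ 3 + d * t₁ ^ 3 = 0) (e₂ : a * s₂ ^ 3 + d * t₂ ^ 3 = 0) :
    a = 0 ∧ d = 0 := by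
  have hD : (s₁ * t₂ - s₂ * t₁) ^ 3 ≠ 0 := pow_ne_zero 3 h₁₂
  refine ⟨?_, ?_⟩ <;> refine (mul_eq_zero.mp ?_).resolve_right hD
  · linear_combination t₂ ^ 3 * e₁ - t₁ ^ 3 * e₂ - (s₁ * t₂ * s₂ * t₁ * (s₁ * t₂ - s₂ * t₁)) * h3a
  · linear_combination s₁ ^ 3 * e₂ - s₂ ^ 3 * e₁ - (s₁ * t₂ * s₂ * t₁ * (s₁ * t₂ - s₂ * t₁)) * h3d

end Scalars

theorem mul_sub_mul_ne_zero_of_not_proportional {K : Type*} [Field K] {p q : K × K}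
    (hq : q ≠ 0) (hpq : ∀ c : K, ¬(p.1 = c * q.1 ∧ p.2 = c * q.2)) :
    p.1 * q.2 - q.1 * p.2 ≠ 0 := by
  intro h
  by_cases hq₁ : q.1 = 0
  · have hq₂ : q.2 ≠ 0 := fun hq₂ => hq (Prod.ext hq₁ hq₂)
    refine hpq (p.2 / q.2) ⟨?_, by field_simp⟩
    field_simp
    linear_combination h
  · refine hpq (p.1 / q.1) ⟨by field_simp, ?_⟩
    field_simp
    linear_combination -h

namespace MvPolynomial

section PDeriv

variable {R : Type*} [CommSemiring R]

theorem pderiv_aeval {σ τ : Type*} [Fintype σ] (ℓ : σ → MvPolynomial τ R) (i : τ)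
    (p : MvPolynomial σ R) :
    pderiv i (aeval ℓ p) = ∑ j, aeval ℓ (pderiv j p) * pderiv i (ℓ j) := by
  classical
  induction p using MvPolynomial.induction_on with
  | C a => simp
  | add p q hp hq => simp only [map_add, hp, hq, add_mul, sum_add_distrib]
  | mul_X p m hp =>
    simp only [map_mul, aeval_X, pderiv_mul, hp, pderiv_X, map_add, add_mul, sum_add_distrib,
      Finset.sum_mul]
    simp [Pi.single_apply, mul_right_comm _ (ℓ m)]

theorem coeff_mul_eq_zero_of_pderiv_eq_zero {σ : Type*} {i : σ} {p : MvPolynomial σ R}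
    (h : pderiv i p = 0) (d : σ →₀ ℕ) : coeff d p * d i = 0 := by
  classical
  rcases Nat.eq_zero_or_pos (d i) with hd | hd
  · simp [hd]
  · have hle : single i 1 ≤ d := single_le_iff.mpr hd
    have := coeff_pderiv (i := i) p (d - single i 1)
    rwa [h, coeff_zero, tsub_add_cancel_of_le hle, tsub_apply, single_eq_same,
      ← Nat.cast_add_one, Nat.sub_add_cancel hd, eq_comm] at this

end PDeriv

section BinaryForms

variable {R : Type*} [CommSemiring R] {Q : MvPolynomial (Fin 2) R} {n : ℕ}

theorem _root_.Finsupp.eq_single_add_single_fin_two (d : Fin 2 →₀ ℕ) :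
    d = single 0 (d 0) + single 1 (d 1) := by
  have := (Finsupp.univ_sum_single d).symm
  rwa [Fin.sum_univ_two] at this

theorem IsHomogeneous.mem_antidiagonal_fin_two (hQ : Q.IsHomogeneous n) {d : Fin 2 →₀ ℕ}
    (hd : coeff d Q ≠ 0) : (d 0, d 1) ∈ antidiagonal n := by
  simpa [weight_apply, Finsupp.sum_fintype, Fin.sum_univ_two] using hQ hd

theorem IsHomogeneous.eval_fin_two (hQ : Q.IsHomogeneous n) (s t : R) :
    eval ![s, t] Q =
      ∑ x ∈ antidiagonal n, coeff (single 0 x.1 + single 1 x.2) Q * s ^ x.1 * t ^ x.2 := by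
  set g : ℕ × ℕ → (Fin 2 →₀ ℕ) := fun x => single 0 x.1 + single 1 x.2
  have hg : ∀ x, g x 0 = x.1 ∧ g x 1 = x.2 := fun x => by simp [g]
  have hsupp : Q.support ⊆ (antidiagonal n).image g := fun d hd =>
    mem_image.mpr ⟨_, hQ.mem_antidiagonal_fin_two (mem_support_iff.mp hd),
      (eq_single_add_single_fin_two d).symm⟩
  rw [eval_eq', sum_subset hsupp fun d _ hd => by simp [notMem_support_iff.mp hd],
    sum_image fun x _ y _ hxy => Prod.ext ((hg x).1 ▸ (hg y).1 ▸ by rw [hxy])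
      ((hg x).2 ▸ (hg y).2 ▸ by rw [hxy])]
  exact sum_congr rfl fun x _ => by simp [g, Fin.prod_univ_two, mul_assoc]

theorem IsHomogeneous.eq_zero_of_coeff_fin_two (hQ : Q.IsHomogeneous n)
    (h : ∀ x ∈ antidiagonal n, coeff (single 0 x.1 + single 1 x.2) Q = 0) : Q = 0 := by
  ext d
  by_contra hd
  exact hd (eq_single_add_single_fin_two d ▸ h _ (hQ.mem_antidiagonal_fin_two hd))

end BinaryForms

section BinaryFormsOverDomain

variable {R : Type*} [CommRing R] [NoZeroDivisors R] {Q : MvPolynomial (Fin 2) R}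

theorem IsHomogeneous.eq_zero_of_eval_eq_zero_of_degree_two (hQ : Q.IsHomogeneous 2)
    {p : Fin 3 → R × R} (hp : ∀ a b, a ≠ b → (p a).1 * (p b).2 - (p b).1 * (p a).2 ≠ 0)
    (hQp : ∀ a, eval ![(p a).1, (p a).2] Q = 0) : Q = 0 := by
  have he : ∀ a, coeff (single 0 2) Q * (p a).1 ^ 2 + coeff (single 0 1 + single 1 1) Q
      * (p a).1 * (p a).2 + coeff (single 1 2) Q * (p a).2 ^ 2 = 0 := fun a => by
    rw [← hQp a, hQ.eval_fin_two]
    simp [Nat.antidiagonal_succ]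
    ring
  obtain ⟨hα, hβ, hγ⟩ := binary_quadratic_coeffs_eq_zero (hp 0 1 (by decide))
    (hp 0 2 (by decide)) (hp 1 2 (by decide)) (he 0) (he 1) (he 2)
  refine hQ.eq_zero_of_coeff_fin_two fun x hx => ?_
  rw [show antidiagonal 2 = {(0, 2), (1, 1), (2, 0)} by rfl] at hx
  simp only [mem_insert, mem_singleton] at hx
  rcases hx with rfl | rfl | rfl <;> simpa

theorem IsHomogeneous.eval_eq_zero_of_pderiv_eq_zero_of_degree_three (hQ : Q.IsHomogeneous 3)
    (h₀ : pderiv 0 Q = 0) (h₁ : pderiv 1 Q = 0) {p q : R × R}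
    (hpq : p.1 * q.2 - q.1 * p.2 ≠ 0) (hp : eval ![p.1, p.2] Q = 0)
    (hq : eval ![q.1, q.2] Q = 0) (s t : R) : eval ![s, t] Q = 0 := by
  have hc₂₁ : coeff (single 0 2 + single 1 1) Q = 0 := by
    have h := coeff_mul_eq_zero_of_pderiv_eq_zero h₁ (single 0 2 + single 1 1)
    simpa using h
  have hc₁₂ : coeff (single 0 1 + single 1 2) Q = 0 := by
    have h := coeff_mul_eq_zero_of_pderiv_eq_zero h₀ (single 0 1 + single 1 2)
    simpa using h
  have hc₃₀ : coeff (single 0 3) Q * 3 = 0 := by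
    simpa only [single_eq_same, Nat.cast_ofNat] using
      coeff_mul_eq_zero_of_pderiv_eq_zero h₀ (single 0 3)
  have hc₀₃ : coeff (single 1 3) Q * 3 = 0 := by
    simpa only [single_eq_same, Nat.cast_ofNat] using
      coeff_mul_eq_zero_of_pderiv_eq_zero h₁ (single 1 3)
  have he : ∀ s t, eval ![s, t] Q = coeff (single 0 3) Q * s ^ 3 + coeff (single 1 3) Q * t ^ 3 :=
    fun s t => by
      rw [hQ.eval_fin_two]
      simp [Nat.antidiagonal_succ, hc₂₁, hc₁₂]
      ring
  obtain ⟨ha, hd⟩ := cubic_coeffs_eq_zero_of_three_mul_eq_zero hc₃₀ hc₀₃ hpq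
    ((he _ _).symm.trans hp) ((he _ _).symm.trans hq)
  rw [he, ha, hd]
  ring

end BinaryFormsOverDomain

end MvPolynomial

section LineParam

variable {σ R : Type*} [CommSemiring R] (A B : σ → R)

noncomputable def lineParam : σ → MvPolynomial (Fin 2) R :=
  fun j => C (A j) * X 0 + C (B j) * X 1

theorem isHomogeneous_lineParam (j : σ) : (lineParam A B j).IsHomogeneous 1 :=
  (isHomogeneous_C_mul_X (A j) 0).add (isHomogeneous_C_mul_X (B j) 1)

theorem eval_aeval_lineParam (g : MvPolynomial σ R) (s t : R) :
    eval ![s, t] (aeval (lineParam A B) g) = eval (s • A + t • B) g := by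
  rw [aeval_eq_bind₁]
  refine (eval₂Hom_bind₁ (RingHom.id R) ![s, t] (lineParam A B) g).trans
    (congrArg (eval · g) (funext fun j => ?_))
  simp [lineParam, mul_comm]

end LineParam

theorem stmt_13_general (k : Type*) [Field k]
    (F : MvPolynomial (Fin 4) k) (hF : F.IsHomogeneous 3)
    (A B : Fin 4 → k)
    (P : Fin 3 → k × k)
    (hdist : ∀ a b : Fin 3, a ≠ b →
      ∀ c : k, ¬((P a).1 = c * (P b).1 ∧ (P a).2 = c * (P b).2))
    (hsing : ∀ a : Fin 3,
      eval ((P a).1 • A + (P a).2 • B) F = 0 ∧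
      ∀ j : Fin 4, eval ((P a).1 • A + (P a).2 • B) (pderiv j F) = 0) :
    ∀ s t : k,
      eval (s • A + t • B) F = 0 ∧
      ∀ j : Fin 4, eval (s • A + t • B) (pderiv j F) = 0 := by
  have hdet : ∀ a b, a ≠ b → (P a).1 * (P b).2 - (P b).1 * (P a).2 ≠ 0 := fun a b hab =>
    mul_sub_mul_ne_zero_of_not_proportional
      (fun h => hdist b a hab.symm 0 (by simp [h])) (hdist a b hab)
  have hℓ := isHomogeneous_lineParam A B
  have hgrad : ∀ j, aeval (lineParam A B) (pderiv j F) = 0 := fun j =>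
    (hF.pderiv.aeval _ hℓ).eq_zero_of_eval_eq_zero_of_degree_two hdet fun a => by
      rw [eval_aeval_lineParam]
      exact (hsing a).2 j
  have hG : ∀ i, pderiv i (aeval (lineParam A B) F) = 0 := fun i => by
    simp only [pderiv_aeval, hgrad, zero_mul, Finset.sum_const_zero]
  refine fun s t => ⟨?_, fun j => ?_⟩
  · rw [← eval_aeval_lineParam]
    refine (hF.aeval _ hℓ).eval_eq_zero_of_pderiv_eq_zero_of_degree_three (hG 0) (hG 1)
      (hdet 0 1 (by decide)) ?_ ?_ s t <;> rw [eval_aeval_lineParam]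
    exacts [(hsing 0).1, (hsing 1).1]
  · rw [← eval_aeval_lineParam, hgrad, map_zero]

/-- Let `k` be a field and `F` a nonzero cubic form in four variables defining a
surface `X ⊆ ℙ³_k` not containing any `k`-plane (no nonzero linear form divides `F`).  If three
pairwise non-proportional singular `k`-points of `X` lie on a common line (spanned by linearly
independent vectors `A`, `B`), then every point of that line is a singular point of `X`. -/
theorem stmt_13 (k : Type*) [Field k]
    (F : MvPolynomial (Fin 4) k) (hF : F.IsHomogeneous 3) (hF0 : F ≠ 0)
    (hplane : ¬ ∃ L : MvPolynomial (Fin 4) k, L ≠ 0 ∧ L.IsHomogeneous 1 ∧ L ∣ F)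
    (A B : Fin 4 → k) (hAB : LinearIndependent k ![A, B])
    (P : Fin 3 → k × k)
    (hdist : ∀ a b : Fin 3, a ≠ b →
      ∀ c : k, ¬((P a).1 = c * (P b).1 ∧ (P a).2 = c * (P b).2))
    (hsing : ∀ a : Fin 3,
      eval ((P a).1 • A + (P a).2 • B) F = 0 ∧
      ∀ j : Fin 4, eval ((P a).1 • A + (P a).2 • B) (pderiv j F) = 0) :
    ∀ s t : k,
      eval (s • A + t • B) F = 0 ∧
      ∀ j : Fin 4, eval (s • A + t • B) (pderiv j F) = 0 :=
  stmt_13_general k F hF A B P hdist hsing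
end

section
/- Let p be prime and F ∈ ℤ[x_0,…,x_n] a form of degree d with v_p(F) = 0 that is unstable at p for the weight system (E, w), where w = (w_0,…,w_n) with 0 = w_0 ≤ w_1 ≤ … ≤ w_n. Then w_n > 0, and for each k with (n+1)w_k ≤ Σw (where Σw = w_0+…+w_n), every monomial x^i of F whose total degree in x_{k+1},…,x_n is less than m_k = ⌊(d/(n+1))·(Σw − (n+1)w_k)/(w_n − w_k)⌋ + 1 has coefficient divisible by p. Equivalently, the reduction F̄ lies in the m_k-th power of the ideal ⟨x_{k+1},…,x_n⟩ ⊆ 𝔽_p[x_0,…,x_n], i.e., the hypersurface F̄ = 0 contains the linear subspace x_{k+1} = … = x_n = 0 with multiplicity at least m_k. -/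
/-!
Substituting `x_j ↦ p^{w_j} x_j` multiplies the coefficient `a_i` by `p^{⟨w,i⟩}`, so instability
says that every `a_i` prime to `p` satisfies `d·Σw < (n+1)·⟨w,i⟩`. Since `w` is monotone,
`⟨w,i⟩ ≤ w_n·s + w_k·(d - s)`, where `s` is the degree of `x^i` in `x_{k+1},…,x_n`; hence
`d·(Σw - (n+1)·w_k) < (n+1)·(w_n - w_k)·s`, i.e. `s ≥ m_k`. If all weights vanished, no
coefficient could be prime to `p`, which gives `w_n > 0`.
-/

open MvPolynomial Finset

namespace MvPolynomial

variable {R σ : Type*} [CommSemiring R]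

theorem aeval_smul_X_monomial (c : σ → R) (u : σ →₀ ℕ) (a : R) :
    aeval (fun j => c j • (X j : MvPolynomial σ R)) (monomial u a) =
      monomial u (a * u.prod fun j e => c j ^ e) := by
  rw [aeval_monomial, monomial_eq, map_mul, map_finsuppProd, algebraMap_eq]
  simp only [smul_eq_C_mul, mul_pow, Finsupp.prod_mul, map_pow, mul_assoc]

theorem coeff_aeval_smul_X (c : σ → R) (F : MvPolynomial σ R) (i : σ →₀ ℕ) :
    (aeval (fun j => c j • (X j : MvPolynomial σ R)) F).coeff i =
      F.coeff i * i.prod fun j e => c j ^ e := by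
  classical
  induction F using induction_on' with
  | monomial u a =>
    rw [aeval_smul_X_monomial, coeff_monomial, coeff_monomial]
    split_ifs with h
    · rw [h]
    · rw [zero_mul]
  | add φ ψ hφ hψ => rw [map_add, coeff_add, coeff_add, hφ, hψ, add_mul]

theorem coeff_aeval_pow_smul_X [Fintype σ] (p : R) (w : σ → ℕ) (F : MvPolynomial σ R)
    (i : σ →₀ ℕ) :
    (aeval (fun j => p ^ w j • (X j : MvPolynomial σ R)) F).coeff i =
      F.coeff i * p ^ ∑ j, w j * i j := by
  rw [coeff_aeval_smul_X, Finsupp.prod_fintype _ _ fun j => pow_zero _]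
  simp only [← pow_mul, prod_pow_eq_pow_sum]

end MvPolynomial

theorem padicValInt_mul_pow_of_not_dvd {p : ℕ} [Fact p.Prime] {a : ℤ} (ha : ¬(p : ℤ) ∣ a)
    (e : ℕ) : padicValInt p (a * (p : ℤ) ^ e) = e := by
  have hp : (p : ℤ) ≠ 0 := Int.natCast_ne_zero.mpr (Fact.out : p.Prime).ne_zero
  rw [padicValInt.mul (by rintro rfl; exact ha (dvd_zero _)) (pow_ne_zero _ hp),
    padicValInt.eq_zero_of_not_dvd ha, zero_add, ← Nat.cast_pow, padicValInt.of_nat,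
    padicValNat.prime_pow]

section MonotoneWeights

variable {n : ℕ} {w : Fin (n + 1) → ℕ}

theorem sum_mul_le_of_monotone (hw : Monotone w) (k : Fin (n + 1)) (i : Fin (n + 1) → ℕ) :
    ∑ j, w j * i j ≤
      w (Fin.last n) * ∑ j ∈ univ.filter (k < ·), i j +
        w k * ∑ j ∈ univ.filter (¬k < ·), i j := by
  rw [← sum_filter_add_sum_filter_not univ (k < ·), mul_sum, mul_sum]
  gcongr with j _ j hj
  · exact hw (Fin.le_last j)
  · exact hw (not_lt.mp (mem_filter.mp hj).2)

theorem mul_sub_lt_of_monotone (hw : Monotone w) {k : Fin (n + 1)} {i : Fin (n + 1) → ℕ}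
    (hk : (n + 1) * w k ≤ ∑ j, w j) (hi : (∑ j, i j) * ∑ j, w j < (n + 1) * ∑ j, w j * i j) :
    (∑ j, i j) * (∑ j, w j - (n + 1) * w k) <
      (n + 1) * (w (Fin.last n) - w k) * ∑ j ∈ univ.filter (k < ·), i j := by
  have hsplit := sum_filter_add_sum_filter_not univ (k < ·) i
  have hle := Nat.mul_le_mul_left (n + 1) (sum_mul_le_of_monotone hw k i)
  zify [hk, hw (Fin.le_last k)] at hi hle hsplit ⊢
  linear_combination hi + hle + (n + 1) * w k * hsplit

end MonotoneWeights

theorem stmt_15_general (p n d : ℕ) (hp : p.Prime)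
    (F : MvPolynomial (Fin (n + 1)) ℤ) (hF : F.IsHomogeneous d)
    (hprim : ¬ ∀ m, (p : ℤ) ∣ F.coeff m)
    (w : Fin (n + 1) → ℕ) (hmono : Monotone w)
    (hunst : ∀ m ∈ (aeval (fun j => (p : ℤ) ^ (w j) •
        (X j : MvPolynomial (Fin (n + 1)) ℤ)) F).support,
      (d : ℤ) * (∑ j, (w j : ℤ)) < (n + 1) *
        padicValInt p ((aeval (fun j => (p : ℤ) ^ (w j) •
          (X j : MvPolynomial (Fin (n + 1)) ℤ)) F).coeff m)) :
    0 < w (Fin.last n) ∧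
    ∀ k : Fin (n + 1), (n + 1) * w k ≤ ∑ j, w j →
      ∀ i ∈ F.support,
        (∑ j ∈ Finset.univ.filter (fun j => k < j), i j) <
          d * ((∑ j, w j) - (n + 1) * w k) / ((n + 1) * (w (Fin.last n) - w k)) + 1 →
        (p : ℤ) ∣ F.coeff i := by
  have := Fact.mk hp
  have hweight : ∀ i, ¬(p : ℤ) ∣ F.coeff i → d * ∑ j, w j < (n + 1) * ∑ j, w j * i j := by
    intro i hi
    have hcoeff : F.coeff i ≠ 0 := by rintro h; exact hi (h ▸ dvd_zero _)
    have hpow := pow_ne_zero (∑ j, w j * i j) (Int.natCast_ne_zero.mpr hp.ne_zero)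
    have h := hunst i (by
      rw [mem_support_iff, coeff_aeval_pow_smul_X]; exact mul_ne_zero hcoeff hpow)
    rw [coeff_aeval_pow_smul_X, padicValInt_mul_pow_of_not_dvd hi] at h
    exact_mod_cast h
  refine ⟨?_, fun k hk i hi hs => ?_⟩
  · obtain ⟨i₀, hi₀⟩ := not_forall.mp hprim
    refine Nat.pos_of_ne_zero fun hlast => ?_
    have hzero : ∀ j, w j = 0 := fun j => Nat.eq_zero_of_le_zero (hlast ▸ hmono (Fin.le_last j))
    simpa [hzero] using hweight i₀ hi₀
  · by_contra hi'
    have hdeg : ∑ j, i j = d := by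
      rw [← hF (mem_support_iff.mp hi), ← Finsupp.degree_eq_sum, Finsupp.degree_eq_weight_one,
        Pi.one_def]
    have hlt := mul_sub_lt_of_monotone hmono hk (hdeg ▸ hweight i hi')
    have := Nat.div_lt_of_lt_mul (hdeg ▸ hlt)
    omega

/-- Let `F` be a form of degree `d` in `n+1` variables with `v_p(F) = 0` that is
unstable at `p` for the weight system `(E, w)` with `0 = w_0 ≤ w_1 ≤ … ≤ w_n` (i.e.
`v_p(F(p^{w_0}x_0,…,p^{w_n}x_n)) > (d/(n+1))·Σw`).  Then `w_n > 0`, and for each `k` with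
`(n+1)w_k ≤ Σw`, every monomial of `F` whose total degree in `x_{k+1},…,x_n` is less than
`m_k = ⌊(d/(n+1))·(Σw − (n+1)w_k)/(w_n − w_k)⌋ + 1` has coefficient divisible by `p`
(equivalently, `F̄` lies in `⟨x_{k+1},…,x_n⟩^{m_k}`). -/
theorem stmt_15 (p n d : ℕ) (hp : p.Prime)
    (F : MvPolynomial (Fin (n + 1)) ℤ) (hF : F.IsHomogeneous d)
    (hprim : ¬ ∀ m, (p : ℤ) ∣ F.coeff m)
    (w : Fin (n + 1) → ℕ) (h0 : w 0 = 0) (hmono : Monotone w)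
    (hunst : ∀ m ∈ (aeval (fun j => (p : ℤ) ^ (w j) •
        (X j : MvPolynomial (Fin (n + 1)) ℤ)) F).support,
      (d : ℤ) * (∑ j, (w j : ℤ)) < (n + 1) *
        padicValInt p ((aeval (fun j => (p : ℤ) ^ (w j) •
          (X j : MvPolynomial (Fin (n + 1)) ℤ)) F).coeff m)) :
    0 < w (Fin.last n) ∧
    ∀ k : Fin (n + 1), (n + 1) * w k ≤ ∑ j, w j →
      ∀ i ∈ F.support,
        (∑ j ∈ Finset.univ.filter (fun j => k < j), i j) <
          d * ((∑ j, w j) - (n + 1) * w k) / ((n + 1) * (w (Fin.last n) - w k)) + 1 →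
        (p : ℤ) ∣ F.coeff i :=
  stmt_15_general p n d hp F hF hprim w hmono hunst
end

section
/- Let p be prime and F = x·y·z + y³ + z³ ∈ ℤ_p[x,y,z]. For i ∈ ℤ_{≥0}, let F_i = p^{-2i}·F(x, p^i y, p^i z) = x y z + p^i y³ + p^i z³. Then the forms F_i (i ≥ 0) fall into infinitely many distinct ℤ_p-equivalence classes; i.e., there is no finite set S such that each F_i equals λ·F_s((x,y,z)·M) for some s ∈ S, λ ∈ ℤ_p^×, and M ∈ GL(3, ℤ_p). -/
open MvPolynomial
open scoped MatrixGroups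

/-- `F_i = x·y·z + p^i·y³ + p^i·z³ = p^{-2i}·F(x, p^i y, p^i z)` for `F = xyz + y³ + z³`. -/
noncomputable def Fi (p : ℕ) [Fact p.Prime] (i : ℕ) : MvPolynomial (Fin 3) ℤ_[p] :=
  X 0 * X 1 * X 2 + ((p : ℤ_[p]) ^ i) • (X 1 ^ 3) + ((p : ℤ_[p]) ^ i) • (X 2 ^ 3)

/-- The forms `F_i = xyz + p^i y³ + p^i z³` (`i ≥ 0`) fall into infinitely many
distinct `ℤ_p`-equivalence classes: there is no finite set `S` such that each `F_i` equals
`λ·F_s((x,y,z)·M)` for some `s ∈ S`, `λ ∈ ℤ_p^×`, `M ∈ GL(3, ℤ_p)`. -/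
theorem stmt_16 (p : ℕ) [Fact p.Prime] :
    ¬ ∃ S : Finset ℕ, ∀ i : ℕ, ∃ s ∈ S, ∃ lam : ℤ_[p]ˣ, ∃ M : GL (Fin 3) ℤ_[p],
      Fi p i = (lam : ℤ_[p]) •
        aeval (fun k => ∑ j, ((M : Matrix (Fin 3) (Fin 3) ℤ_[p]) j k) •
          (X j : MvPolynomial (Fin 3) ℤ_[p])) (Fi p s) := by
  rintro ⟨S, hS⟩
  obtain ⟨s, hsS, lam, M, hM⟩ := hS (S.sup id + 1)
  set i := S.sup id + 1 with hidef
  have hsi : s < i := Nat.lt_succ_of_le (Finset.le_sup (f := id) hsS)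
  set A : Matrix (Fin 3) (Fin 3) ℤ_[p] := (M : Matrix (Fin 3) (Fin 3) ℤ_[p]) with hA
  set N : Matrix (Fin 3) (Fin 3) ℤ_[p] :=
    ((M⁻¹ : GL (Fin 3) ℤ_[p]) : Matrix (Fin 3) (Fin 3) ℤ_[p]) with hNdef
  have hNM : N * A = 1 := Units.inv_mul M
  -- the first row of N has a unit entry
  have hrow : ∃ j, IsUnit (N 0 j) := by
    by_contra hcon
    push_neg at hcon
    have h00 : (∑ j, N 0 j * A j 0) = 1 := by
      have := congrArg (fun B => B 0 0) hNM
      simpa [Matrix.mul_apply, Matrix.one_apply] using this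
    have hmem : (∑ j, N 0 j * A j 0) ∈ IsLocalRing.maximalIdeal ℤ_[p] :=
      Ideal.sum_mem _ (fun j _ =>
        Ideal.mul_mem_right _ _ ((IsLocalRing.mem_maximalIdeal _).2 (hcon j)))
    rw [h00] at hmem
    exact (IsLocalRing.maximalIdeal.isMaximal ℤ_[p]).ne_top
      (Ideal.eq_top_of_isUnit_mem _ hmem isUnit_one)
  obtain ⟨j₀, u, hu⟩ := hrow
  set w : ℤ_[p] := -((N 1 j₀) * ↑u⁻¹) with hw
  set W : Fin 3 → ℤ_[p] := ![w, 1, 0] with hWdef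
  set v : Fin 3 → ℤ_[p] := fun j => ∑ l, N l j * W l with hvdef
  have huu : N 0 j₀ * ↑u⁻¹ = 1 := by rw [← hu]; exact u.mul_inv
  have hvj₀ : v j₀ = 0 := by
    show (∑ l, N l j₀ * W l) = 0
    rw [Fin.sum_univ_three]
    show N 0 j₀ * w + N 1 j₀ * 1 + N 2 j₀ * 0 = 0
    rw [hw]
    linear_combination (-(N 1 j₀)) * huu
  have hvv : v = N.transpose.mulVec W := by
    funext j
    simp [hvdef, Matrix.mulVec, dotProduct, Matrix.transpose_apply]
  have hWk : ∀ k, (aeval v) (∑ j, A j k • (X j : MvPolynomial (Fin 3) ℤ_[p])) = W k := by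
    intro k
    have expand : (aeval v) (∑ j, A j k • (X j : MvPolynomial (Fin 3) ℤ_[p]))
        = ∑ j, A j k * v j := by
      simp [smul_eq_mul]
    rw [expand]
    have h2 : (∑ j, A j k * v j) = A.transpose.mulVec v k := by
      simp [Matrix.mulVec, dotProduct, Matrix.transpose_apply]
    rw [h2, hvv, Matrix.mulVec_mulVec, ← Matrix.transpose_mul, hNM]
    simp
  -- evaluate both sides of hM at v
  have h1 := congrArg (aeval v) hM
  rw [map_smul] at h1
  have hcomp : (aeval v) ((aeval fun k => ∑ j, A j k • (X j : MvPolynomial (Fin 3) ℤ_[p]))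
      (Fi p s)) = (aeval W) (Fi p s) := by
    rw [← AlgHom.comp_apply, MvPolynomial.comp_aeval]
    have : (fun k => (aeval v) (∑ j, A j k • (X j : MvPolynomial (Fin 3) ℤ_[p]))) = W :=
      funext hWk
    rw [this]
  rw [hcomp] at h1
  have hL : (aeval v) (Fi p i)
      = v 0 * v 1 * v 2 + (p : ℤ_[p]) ^ i * (v 1) ^ 3 + (p : ℤ_[p]) ^ i * (v 2) ^ 3 := by
    simp [Fi, smul_eq_mul]
  have hR : (aeval W) (Fi p s) = (p : ℤ_[p]) ^ s := by
    simp [Fi, hWdef, smul_eq_mul]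
  have hzero : ∀ (f : Fin 3 → ℤ_[p]) (j : Fin 3), f j = 0 → f 0 * f 1 * f 2 = 0 := by
    intro f j h
    fin_cases j
    · have h' : f 0 = 0 := h; rw [h']; ring
    · have h' : f 1 = 0 := h; rw [h']; ring
    · have h' : f 2 = 0 := h; rw [h']; ring
  have hprod : v 0 * v 1 * v 2 = 0 := hzero v j₀ hvj₀
  rw [hL, hR, hprod, smul_eq_mul] at h1
  have hdvd0 : (p : ℤ_[p]) ^ i ∣ (lam : ℤ_[p]) * (p : ℤ_[p]) ^ s :=
    ⟨(v 1) ^ 3 + (v 2) ^ 3, by linear_combination -h1⟩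
  have hdvd : (p : ℤ_[p]) ^ i ∣ (p : ℤ_[p]) ^ s := (Units.dvd_mul_left).mp hdvd0
  obtain ⟨t, ht⟩ := hdvd
  have hnorm : ‖(p : ℤ_[p]) ^ s‖ ≤ ‖(p : ℤ_[p]) ^ i‖ := by
    rw [ht, norm_mul]
    exact mul_le_of_le_one_right (norm_nonneg _) t.norm_le_one
  rw [PadicInt.norm_p_pow, PadicInt.norm_p_pow] at hnorm
  have hp1 : 1 < (p : ℝ) := by exact_mod_cast (Fact.out : p.Prime).one_lt
  have : (-(s : ℤ)) ≤ (-(i : ℤ)) := (zpow_le_zpow_iff_right₀ hp1).mp hnorm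
  omega
end

section
/- Let d be a positive multiple of 3, write d = 3δ. For an exponent vector i = (i_0,i_1,i_2) with i_0+i_1+i_2 = d, let g = gcd(d−3i_1, d−3i_2), a_i = (2d−3i_1−3i_2)/g, b_i = (d−3i_2)/g. Then: (1) if a_i ≥ 0 > b_i, then g·(|a_i| + |b_i|) ≤ d, and the reduced fraction −a_i/b_i = |a_i|/|b_i| has numerator-plus-denominator at most δ; (2) if b_i ≥ 0 > a_i, then the reduced fraction |a_i|/|b_i| has numerator and denominator each at most δ. -/
/-!
Write `u = d - 3 i₁` and `v = d - 3 i₂`, so that `g = gcd(u, v)` and, using `i₀ + i₁ + i₂ = d`,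
`g a = u + v = 3 i₀ - d`, `g b = v = d - 3 i₂` and `g (a - b) = u = d - 3 i₁`. Each of the
quantities `g (a - b)`, `-g a`, `g b` is therefore at most `d`. Since `3` divides both `u` and `v`,
it divides `g`, so `g ≥ 3` as soon as `g ≠ 0`; dividing by `g ≥ 3` turns each bound `≤ d = 3δ`
into a bound `≤ δ`.
-/

lemma le_of_mul_le_mul_of_dvd {n g x y : ℤ} (hn : 0 < n) (hg : 0 < g) (hng : n ∣ g)
    (hx : 0 ≤ x) (h : g * x ≤ n * y) : x ≤ y :=
  le_of_mul_le_mul_left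
    (calc n * x ≤ g * x := mul_le_mul_of_nonneg_right (Int.le_of_dvd hg hng) hx
      _ ≤ n * y := h) hn

lemma pos_of_ediv_ne_zero {x : ℤ} {g : ℕ} (h : x / g ≠ 0) : 0 < (g : ℤ) := by
  rcases Nat.eq_zero_or_pos g with rfl | hg
  · simp at h
  · exact_mod_cast hg

theorem stmt_18_general (δ : ℕ) (d : ℕ) (hd : d = 3 * δ)
    (i0 i1 i2 : ℕ) (hi : i0 + i1 + i2 = d)
    (g : ℕ) (hg : g = Int.gcd ((d : ℤ) - 3 * i1) ((d : ℤ) - 3 * i2))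
    (a b : ℤ)
    (ha : a = (2 * (d : ℤ) - 3 * i1 - 3 * i2) / g)
    (hb : b = ((d : ℤ) - 3 * i2) / g) :
    (a ≥ 0 → b < 0 →
      (g : ℤ) * (a.natAbs + b.natAbs) ≤ d ∧ a.natAbs + b.natAbs ≤ δ) ∧
    (b ≥ 0 → a < 0 → a.natAbs ≤ δ ∧ b.natAbs ≤ δ) := by
  have h3g : (3 : ℤ) ∣ g := hg ▸ Int.dvd_coe_gcd ⟨δ - i1, by omega⟩ ⟨δ - i2, by omega⟩
  have hgu : (g : ℤ) ∣ (d : ℤ) - 3 * i1 := hg ▸ Int.gcd_dvd_left _ _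
  have hgv : (g : ℤ) ∣ (d : ℤ) - 3 * i2 := hg ▸ Int.gcd_dvd_right _ _
  have hguv : (g : ℤ) ∣ 2 * (d : ℤ) - 3 * i1 - 3 * i2 := by
    rw [show 2 * (d : ℤ) - 3 * i1 - 3 * i2 = (d - 3 * i1) + (d - 3 * i2) by ring]
    exact dvd_add hgu hgv
  have hga : (g : ℤ) * a = 3 * i0 - d := by
    rw [ha, Int.mul_ediv_cancel' hguv]; omega
  have hgb : (g : ℤ) * b = d - 3 * i2 := hb ▸ Int.mul_ediv_cancel' hgv
  refine ⟨fun ha_nonneg hb_neg => ?_, fun hb_nonneg ha_neg => ?_⟩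
  · have hg0 : 0 < (g : ℤ) := pos_of_ediv_ne_zero (hb ▸ hb_neg.ne)
    have habs : (a.natAbs : ℤ) + b.natAbs = a - b := by omega
    have hgab : (g : ℤ) * (a - b) = d - 3 * i1 := by rw [mul_sub]; omega
    have hab : a - b ≤ δ := le_of_mul_le_mul_of_dvd three_pos hg0 h3g (by omega) (by omega)
    exact ⟨by rw [habs, hgab]; omega, by omega⟩
  · have hg0 : 0 < (g : ℤ) := pos_of_ediv_ne_zero (ha ▸ ha_neg.ne)
    have ha' : -a ≤ δ := le_of_mul_le_mul_of_dvd three_pos hg0 h3g (by omega)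
      (by rw [mul_neg]; omega)
    have hb' : b ≤ δ := le_of_mul_le_mul_of_dvd three_pos hg0 h3g hb_nonneg (by omega)
    omega

/-- Let `d = 3δ` be a positive multiple of `3`, and `i = (i_0,i_1,i_2)` with
`i_0+i_1+i_2 = d`.  Put `g = gcd(d−3i_1, d−3i_2)`, `a = (2d−3i_1−3i_2)/g`, `b = (d−3i_2)/g`.
Then: (1) if `a ≥ 0 > b`, then `g·(|a|+|b|) ≤ d` and `|a|+|b| ≤ δ` (the reduced fraction
`|a|/|b|` has numerator-plus-denominator at most `δ`); (2) if `b ≥ 0 > a`, then `|a| ≤ δ` and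
`|b| ≤ δ`. -/
theorem stmt_18 (δ : ℕ) (hδ : 0 < δ) (d : ℕ) (hd : d = 3 * δ)
    (i0 i1 i2 : ℕ) (hi : i0 + i1 + i2 = d)
    (g : ℕ) (hg : g = Int.gcd ((d : ℤ) - 3 * i1) ((d : ℤ) - 3 * i2))
    (a b : ℤ)
    (ha : a = (2 * (d : ℤ) - 3 * i1 - 3 * i2) / g)
    (hb : b = ((d : ℤ) - 3 * i2) / g) :
    (a ≥ 0 → b < 0 →
      (g : ℤ) * (a.natAbs + b.natAbs) ≤ d ∧ a.natAbs + b.natAbs ≤ δ) ∧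
    (b ≥ 0 → a < 0 → a.natAbs ≤ δ ∧ b.natAbs ≤ δ) :=
  stmt_18_general δ d hd i0 i1 i2 hi g hg a b ha hb
end
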